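/- arXiv:1910.02454 — 7 statements merged into one kernel-verified Lean document; each statement's English description precedes it below -/
import Mathlib

section
/- Let G be a digraph and let P be an optimal colouring of G with the minimum number of singleton colour classes (an extreme colouring). If {u} is a singleton class of P and v is a vertex in a colour class of P of size at least 3, then both arcs (u,v) and (v,u) are present in G. -/
open Finset

/-- A finite vertex subset is acyclic in the digraph with arc relation `E`
if it induces no directed cycle. -/
def DiAcyclic {V : Type*} (E : V → V → Prop) (S : Finset V) : Prop :=
  ∀ v ∈ S, ¬ Relation.TransGen (fun a b => a ∈ S ∧ b ∈ S ∧ E a b) v v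

/-- A colouring of a digraph: a partition of the vertex set into acyclic sets. -/
def IsDiColoring {V : Type*} [Fintype V] [DecidableEq V] (E : V → V → Prop)
    (P : Finpartition (Finset.univ : Finset V)) : Prop :=
  ∀ S ∈ P.parts, DiAcyclic E S

/-- The dichromatic number. -/
noncomputable def dichi (V : Type*) [Fintype V] [DecidableEq V] (E : V → V → Prop) : ℕ :=
  sInf {n | ∃ P : Finpartition (Finset.univ : Finset V), IsDiColoring E P ∧ P.parts.card = n}

/-- Induced subdigraph relation on a vertex subset. -/
def inducedRel {V : Type*} (E : V → V → Prop) (U : Finset V) : ↥U → ↥U → Prop :=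
  fun a b => E a.1 b.1

/-- `k`-vertex-critical digraph. -/
def VertexCritical {V : Type*} [Fintype V] [DecidableEq V] (E : V → V → Prop) (k : ℕ) : Prop :=
  dichi V E = k ∧ ∀ U : Finset V, U ⊂ Finset.univ → dichi ↥U (inducedRel E U) < k

/-- Complement digraph. -/
def diCompl {V : Type*} (E : V → V → Prop) : V → V → Prop :=
  fun a b => a ≠ b ∧ ¬ E a b

/-- Underlying undirected graph of a digraph. -/
def underlying {V : Type*} (E : V → V → Prop) : SimpleGraph V where
  Adj a b := a ≠ b ∧ (E a b ∨ E b a)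
  symm := ⟨fun a b ⟨h1, h2⟩ => ⟨h1.symm, h2.symm⟩⟩
  loopless := ⟨fun a ⟨h, _⟩ => h rfl⟩

/-- Number of singleton colour classes. -/
def numSingle {V : Type*} [Fintype V] [DecidableEq V]
    (P : Finpartition (Finset.univ : Finset V)) : ℕ :=
  (P.parts.filter fun S => S.card = 1).card

/-- Extreme colouring: optimal with fewest singleton classes. -/
def Extreme {V : Type*} [Fintype V] [DecidableEq V] (E : V → V → Prop)
    (P : Finpartition (Finset.univ : Finset V)) : Prop :=
  IsDiColoring E P ∧ P.parts.card = dichi V E ∧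
    ∀ Q : Finpartition (Finset.univ : Finset V),
      IsDiColoring E Q → Q.parts.card = dichi V E → numSingle P ≤ numSingle Q

/-- Maximum matching of a simple graph. -/
def IsMaxMatching {V : Type*} (H : SimpleGraph V) (M : H.Subgraph) : Prop :=
  M.IsMatching ∧ ∀ M' : H.Subgraph, M'.IsMatching → M'.edgeSet.ncard ≤ M.edgeSet.ncard

/-- Matching number. -/
noncomputable def matchNum {V : Type*} (H : SimpleGraph V) : ℕ :=
  sSup {n | ∃ M : H.Subgraph, M.IsMatching ∧ M.edgeSet.ncard = n}

/-- The set `D(H)` of vertices missed by at least one maximum matching. -/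
def GED {V : Type*} (H : SimpleGraph V) : Set V :=
  {v | ∃ M : H.Subgraph, IsMaxMatching H M ∧ v ∉ M.verts}

/-- The set `A(H)`. -/
def GEA {V : Type*} (H : SimpleGraph V) : Set V :=
  {v | v ∉ GED H ∧ ∃ u ∈ GED H, H.Adj v u}

/-- The set `C(H)`. -/
def GEC {V : Type*} (H : SimpleGraph V) : Set V :=
  {v | v ∉ GED H ∧ v ∉ GEA H}

/-! If `u` and `v` do not form a 2-cycle, then `{u, v}` is acyclic (loops at `u` and `v` are
ruled out by the acyclicity of their classes). Replacing the classes `{u}` and `S` by `{u, v}` and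
`S \ {v}`, both of size at least 2, gives another optimal colouring with one singleton class
fewer, contradicting extremality. -/

section Acyclic

variable {V : Type*} {E : V → V → Prop}

theorem DiAcyclic.mono {S T : Finset V} (hS : DiAcyclic E S) (hTS : T ⊆ S) :
    DiAcyclic E T := fun w hw hcyc =>
  hS w (hTS hw) <|
    Relation.TransGen.mono (fun _ _ ⟨ha, hb, hab⟩ => ⟨hTS ha, hTS hb, hab⟩) w w hcyc

theorem DiAcyclic.not_rel_self {S : Finset V} (hS : DiAcyclic E S) {v : V} (hv : v ∈ S) :
    ¬E v v := fun hvv => hS v hv (.single ⟨hv, hv, hvv⟩)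

theorem diAcyclic_pair [DecidableEq V] {u v : V} (hu : ¬E u u) (hv : ¬E v v)
    (huv : ¬(E u v ∧ E v u)) : DiAcyclic E {u, v} := by
  intro w hw hcyc
  -- a closed walk in `{u, v}` leaves `w` along one arc and comes back along the reverse one
  obtain ⟨b, ⟨-, hb, hwb⟩, -⟩ := Relation.TransGen.head'_iff.mp hcyc
  obtain ⟨c, -, hc, -, hcw⟩ := Relation.TransGen.tail'_iff.mp hcyc
  simp only [mem_insert, mem_singleton] at hw hb hc
  rcases hw with rfl | rfl <;> rcases hb with rfl | rfl <;> rcases hc with rfl | rfl <;> tauto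

end Acyclic

namespace Finpartition

variable {α : Type*} [DecidableEq α] {s : Finset α} (P : Finpartition s)

theorem notMem_sdiff_pair_of_subset_union {A B C : Finset α} (hA : A ∈ P.parts)
    (hB : B ∈ P.parts) (hC : C.Nonempty) (hCAB : C ⊆ A ∪ B) : C ∉ P.parts \ {A, B} := by
  intro hmem
  obtain ⟨hCP, hCne⟩ := mem_sdiff.mp hmem
  obtain ⟨x, hx⟩ := hC
  rcases mem_union.mp (hCAB hx) with hxA | hxB
  · exact hCne (by simp [P.eq_of_mem_parts hCP hA hx hxA])
  · exact hCne (by simp [P.eq_of_mem_parts hCP hB hx hxB])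

section Resplit

variable {A B A' B' : Finset α} (hA : A ∈ P.parts) (hB : B ∈ P.parts) (hA' : A'.Nonempty)
  (hB' : B'.Nonempty) (hdisj : Disjoint A' B') (hunion : A' ∪ B' = A ∪ B)

@[simps]
def resplit : Finpartition s where
  parts := insert A' (insert B' (P.parts \ {A, B}))
  supIndep := by
    have hrest : ∀ C ∈ P.parts \ {A, B}, Disjoint (A ∪ B) C := by
      intro C hC
      obtain ⟨hCP, hCAB⟩ := mem_sdiff.mp hC
      simp only [mem_insert, mem_singleton, not_or] at hCAB
      exact disjoint_union_left.mpr
        ⟨P.disjoint hA hCP (Ne.symm hCAB.1), P.disjoint hB hCP (Ne.symm hCAB.2)⟩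
    have hA'AB : A' ⊆ A ∪ B := hunion ▸ subset_union_left
    have hB'AB : B' ⊆ A ∪ B := hunion ▸ subset_union_right
    rw [supIndep_iff_pairwiseDisjoint, coe_insert, coe_insert,
      Set.pairwiseDisjoint_insert, Set.pairwiseDisjoint_insert]
    refine ⟨⟨P.disjoint.subset sdiff_subset, fun C hC _ =>
      (hrest C hC).mono_left hB'AB⟩, ?_⟩
    rintro C (rfl | hC) -
    · exact hdisj
    · exact (hrest C hC).mono_left hA'AB
  sup_parts := by
    have hAB : {A, B} ⊆ P.parts := by simp [insert_subset_iff, hA, hB]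
    refine Eq.trans ?_ P.sup_parts
    conv_rhs => rw [← union_sdiff_of_subset hAB]
    rw [sup_insert, sup_insert, sup_union, ← sup_assoc]
    simp [hunion]
  bot_notMem := by
    simp only [mem_insert, bot_eq_empty, not_or]
    exact ⟨hA'.ne_empty.symm, hB'.ne_empty.symm,
      fun h => P.bot_notMem (mem_sdiff.mp h).1⟩

theorem card_parts_resplit (hAB : A ≠ B) :
    #(P.resplit hA hB hA' hB' hdisj hunion).parts = #P.parts := by
  have hA'B' : A' ≠ B' := by
    rintro rfl
    exact hA'.ne_empty (disjoint_self.mp hdisj)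
  have hA'rest := P.notMem_sdiff_pair_of_subset_union hA hB hA' (hunion ▸ subset_union_left)
  have hB'rest := P.notMem_sdiff_pair_of_subset_union hA hB hB' (hunion ▸ subset_union_right)
  have hAB_sub : {A, B} ⊆ P.parts := by simp [insert_subset_iff, hA, hB]
  have h2 : 2 ≤ #P.parts := card_pair hAB ▸ card_le_card hAB_sub
  rw [resplit_parts, card_insert_of_notMem (by simp [hA'B', hA'rest]),
    card_insert_of_notMem hB'rest, card_sdiff_of_subset hAB_sub, card_pair hAB]
  omega

end Resplit

end Finpartition

section Colouring

variable {V : Type*} [Fintype V] [DecidableEq V] {P : Finpartition (univ : Finset V)}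
  {A B A' B' : Finset V} (hA : A ∈ P.parts) (hB : B ∈ P.parts) (hA' : A'.Nonempty)
  (hB' : B'.Nonempty) (hdisj : Disjoint A' B') (hunion : A' ∪ B' = A ∪ B)

theorem IsDiColoring.resplit {E : V → V → Prop} (hP : IsDiColoring E P) (hA'E : DiAcyclic E A')
    (hB'E : DiAcyclic E B') : IsDiColoring E (P.resplit hA hB hA' hB' hdisj hunion) := by
  intro C hC
  simp only [Finpartition.resplit_parts, mem_insert, mem_sdiff] at hC
  rcases hC with rfl | rfl | ⟨hC, -⟩
  exacts [hA'E, hB'E, hP C hC]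

theorem numSingle_resplit_lt (hA1 : #A = 1) (hA'1 : #A' ≠ 1) (hB'1 : #B' ≠ 1) :
    numSingle (P.resplit hA hB hA' hB' hdisj hunion) < numSingle P := by
  apply card_lt_card
  rw [ssubset_iff_of_subset]
  · refine ⟨A, mem_filter.mpr ⟨hA, hA1⟩, ?_⟩
    simp only [mem_filter, Finpartition.resplit_parts, mem_insert, mem_sdiff]
    rintro ⟨rfl | rfl | ⟨-, hA⟩, -⟩
    exacts [hA'1 hA1, hB'1 hA1, hA (.inl trivial)]
  · intro C hC
    simp only [mem_filter, Finpartition.resplit_parts, mem_insert, mem_sdiff] at hC ⊢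
    obtain ⟨rfl | rfl | ⟨hC, -⟩, hC1⟩ := hC
    exacts [absurd hC1 hA'1, absurd hC1 hB'1, ⟨hC, hC1⟩]

end Colouring

theorem stmt5_general {V : Type*} [Fintype V] [DecidableEq V] (E : V → V → Prop)
    (P : Finpartition (Finset.univ : Finset V))
    (hP : Extreme E P) (u v : V) (S : Finset V)
    (hu : {u} ∈ P.parts) (hS : S ∈ P.parts) (hv : v ∈ S) (h3 : 3 ≤ S.card) :
    E u v ∧ E v u := by
  obtain ⟨hcol, hcard, hmin⟩ := hP
  by_contra huv
  have huS : u ∉ S := by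
    intro huS
    rw [← P.eq_of_mem_parts hu hS (mem_singleton_self u) huS, card_singleton] at h3
    omega
  have hSu : {u} ≠ S := fun h => huS (h ▸ mem_singleton_self u)
  have hne : u ≠ v := fun h => huS (h ▸ hv)
  have hSv : #(S.erase v) = #S - 1 := card_erase_of_mem hv
  have hdisj : Disjoint {u, v} (S.erase v) := by
    simp [disjoint_insert_left, huS]
  have hunion : {u, v} ∪ S.erase v = {u} ∪ S := by
    rw [insert_union, singleton_union, insert_erase hv, insert_eq]
  have hpair : DiAcyclic E {u, v} :=
    diAcyclic_pair ((hcol _ hu).not_rel_self (mem_singleton_self u))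
      ((hcol S hS).not_rel_self hv) huv
  let Q := P.resplit hu hS (insert_nonempty u {v}) (card_pos.mp (by omega)) hdisj hunion
  have hQcol : IsDiColoring E Q := hcol.resplit hu hS _ _ hdisj hunion hpair
    ((hcol S hS).mono (erase_subset v S))
  have hQcard : #Q.parts = dichi V E :=
    (P.card_parts_resplit hu hS _ _ hdisj hunion hSu).trans hcard
  have hlt : numSingle Q < numSingle P :=
    numSingle_resplit_lt hu hS _ _ hdisj hunion (card_singleton u) (by simp [card_pair hne])
      (by omega)
  exact (hmin Q hQcol hQcard).not_gt hlt

theorem stmt5 {V : Type*} [Fintype V] [DecidableEq V] (E : V → V → Prop)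
    (hirr : Irreflexive E) (P : Finpartition (Finset.univ : Finset V))
    (hP : Extreme E P) (u v : V) (S : Finset V)
    (hu : {u} ∈ P.parts) (hS : S ∈ P.parts) (hv : v ∈ S) (h3 : 3 ≤ S.card) :
    E u v ∧ E v u :=
  stmt5_general E P hP u v S hu hS hv h3
end

section
/- Let G be a digraph, P an extreme colouring of G, W the union of the colour classes of P of size at least 3, and U = V(G)∖W. Then χ(G) = χ(G[W]) + χ(G[U]). -/
open Finset

/-!
`W` and `U` are unions of colour classes of the optimal colouring `P`, so `P` splits into
colourings of `G[W]` and `G[U]` with `χ(G)` classes in total, whence `χ(G[W]) + χ(G[U]) ≤ χ(G)`.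
Conversely, optimal colourings of `G[W]` and `G[U]` together form a colouring of `G`.
-/

open Function Relation

theorem Relation.transGen_onFun_iff {α β : Type*} {f : α → β} {p : β → β → Prop}
    (hp : ∀ b c, p b c → b ∈ Set.range f) {a a' : α} :
    TransGen (p on f) a a' ↔ TransGen p (f a) (f a') := by
  refine ⟨fun h => TransGen.lift f (fun _ _ h => h) _ _ h, fun h => ?_⟩
  suffices ∀ {b c}, TransGen p b c → ∀ a a', b = f a → c = f a' → TransGen (p on f) a a' from
    this h a a' rfl rfl
  intro b c h
  induction h with
  | single hbc => rintro a a' rfl rfl; exact .single hbc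
  | tail _ hcd ih =>
    rintro a a' rfl rfl
    obtain ⟨m, rfl⟩ := hp _ _ hcd
    exact (ih a m rfl rfl).tail hcd

namespace Finpartition

variable {α : Type*} [DecidableEq α]

def union [Lattice α] [OrderBot α] [IsModularLattice α] {a b : α}
    (P : Finpartition a) (Q : Finpartition b) (h : Disjoint a b) : Finpartition (a ⊔ b) where
  parts := P.parts ∪ Q.parts
  supIndep := P.supIndep.union Q.supIndep (by rwa [P.sup_parts, Q.sup_parts])
  sup_parts := by rw [sup_union, P.sup_parts, Q.sup_parts]
  bot_notMem := by simp [P.bot_notMem, Q.bot_notMem]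

theorem card_union_parts [Lattice α] [OrderBot α] [IsModularLattice α] {a b : α}
    (P : Finpartition a) (Q : Finpartition b) (h : Disjoint a b) :
    #(P.union Q h).parts = #P.parts + #Q.parts := by
  refine card_union_of_disjoint (Finset.disjoint_left.2 fun p hpP hpQ => P.ne_bot hpP ?_)
  exact disjoint_self.1 (h.mono (P.le hpP) (Q.le hpQ))

def ofUnivSubtype {s : Finset α} (Q : Finpartition (univ : Finset s)) : Finpartition s :=
  ofExistsUnique (Q.parts.map (mapEmbedding (Embedding.subtype _)).toEmbedding)
    (by
      simp only [mem_map, RelEmbedding.coe_toEmbedding, mapEmbedding_apply, forall_exists_index,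
        and_imp]
      rintro _ t - rfl a ha
      exact property_of_mem_map_subtype t ha)
    (by
      intro a ha
      have hmem : ∀ t : Finset s, a ∈ t.map (Embedding.subtype _) ↔ ⟨a, ha⟩ ∈ t :=
        fun t => mem_map' (Embedding.subtype _) (a := ⟨a, ha⟩)
      obtain ⟨t, ⟨ht, hat⟩, huniq⟩ := Q.existsUnique_mem (mem_univ ⟨a, ha⟩)
      refine ⟨_, ⟨mem_map_of_mem _ ht, (hmem t).2 hat⟩, ?_⟩
      simp only [mem_map, RelEmbedding.coe_toEmbedding, mapEmbedding_apply, and_imp,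
        forall_exists_index]
      rintro _ t' ht' rfl hat'
      rw [huniq t' ⟨ht', (hmem t').1 hat'⟩])
    (by simp [Q.empty_notMem_parts])

theorem card_ofUnivSubtype_parts {s : Finset α} (Q : Finpartition (univ : Finset s)) :
    #Q.ofUnivSubtype.parts = #Q.parts :=
  card_map _

theorem exists_ofUnivSubtype_parts_eq {s : Finset α} (P : Finpartition s) :
    ∃ Q : Finpartition (univ : Finset s), Q.ofUnivSubtype.parts = P.parts := by
  have hmap : ∀ t ∈ P.parts, (t.subtype (· ∈ s)).map (Embedding.subtype _) = t :=
    fun t ht => subtype_map_of_mem fun _ hx => P.subset ht hx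
  refine ⟨ofExistsUnique (P.parts.image (·.subtype (· ∈ s))) (fun _ _ => subset_univ _) ?_ ?_, ?_⟩
  · rintro ⟨a, ha⟩ -
    obtain ⟨t, ⟨ht, hat⟩, huniq⟩ := P.existsUnique_mem ha
    refine ⟨_, ⟨mem_image_of_mem _ ht, mem_subtype.2 hat⟩, ?_⟩
    simp only [mem_image, and_imp, forall_exists_index]
    rintro _ t' ht' rfl hat'
    rw [huniq t' ⟨ht', mem_subtype.1 hat'⟩]
  · simp only [mem_image, not_exists, not_and, subtype_eq_empty]
    intro t ht hempty
    obtain ⟨a, ha⟩ := P.nonempty_of_mem_parts ht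
    exact hempty a (P.subset ht ha) ha
  · rw [ofUnivSubtype, ofExistsUnique_parts, ofExistsUnique_parts, map_eq_image, image_image]
    exact (image_congr hmap).trans image_id'

theorem sup_filter_not_eq_sdiff {s : Finset α} (P : Finpartition s) (p : Finset α → Prop)
    [DecidablePred p] :
    (P.parts.filter (¬ p ·)).sup id = s \ (P.parts.filter p).sup id := by
  ext a
  simp only [mem_sup, mem_filter, id, mem_sdiff, not_exists, not_and]
  constructor
  · rintro ⟨t, ⟨ht, hnp⟩, hat⟩
    exact ⟨P.subset ht hat, fun t' ⟨ht', hp⟩ hat' => hnp (P.eq_of_mem_parts ht' ht hat' hat ▸ hp)⟩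
  · rintro ⟨ha, hnot⟩
    obtain ⟨t, ht, hat⟩ := P.exists_mem ha
    exact ⟨t, ⟨ht, fun hp => hnot t ⟨ht, hp⟩ hat⟩, hat⟩

end Finpartition

section Dichromatic

variable {V : Type*}

theorem diAcyclic_map_subtype_iff (E : V → V → Prop) {T : Finset V} (S : Finset T) :
    DiAcyclic E (S.map (Embedding.subtype _)) ↔ DiAcyclic (inducedRel E T) S := by
  set r : V → V → Prop := fun a b =>
    a ∈ S.map (Embedding.subtype _) ∧ b ∈ S.map (Embedding.subtype _) ∧ E a b
  have hr : (r on Subtype.val) = fun x y => x ∈ S ∧ y ∈ S ∧ inducedRel E T x y := by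
    ext x y
    exact and_congr (mem_map' (Embedding.subtype _))
      (and_congr (mem_map' (Embedding.subtype _)) Iff.rfl)
  have hsrc : ∀ a b, r a b → a ∈ Set.range Subtype.val := fun a _ h =>
    ⟨⟨a, property_of_mem_map_subtype S h.1⟩, rfl⟩
  simp only [DiAcyclic, forall_mem_map, Embedding.subtype_apply]
  refine forall₂_congr fun x _ => not_congr ?_
  rw [← hr]
  exact (transGen_onFun_iff hsrc).symm

variable [DecidableEq V] (E : V → V → Prop)

theorem isDiColoring_inducedRel_iff {T : Finset V} (Q : Finpartition (univ : Finset T)) :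
    IsDiColoring (inducedRel E T) Q ↔ ∀ S ∈ Q.ofUnivSubtype.parts, DiAcyclic E S := by
  simp only [Finpartition.ofUnivSubtype, Finpartition.ofExistsUnique_parts, forall_mem_map,
    RelEmbedding.coe_toEmbedding, mapEmbedding_apply, diAcyclic_map_subtype_iff]
  rfl

variable [Fintype V]

theorem dichi_le_card {P : Finpartition (univ : Finset V)} (hP : IsDiColoring E P) :
    dichi V E ≤ #P.parts :=
  Nat.sInf_le ⟨P, hP, rfl⟩

theorem IsDiColoring.exists_card_eq_dichi {P : Finpartition (univ : Finset V)}
    (hP : IsDiColoring E P) :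
    ∃ Q : Finpartition (univ : Finset V), IsDiColoring E Q ∧ #Q.parts = dichi V E :=
  Nat.sInf_mem (s := {n | ∃ Q : Finpartition (univ : Finset V), IsDiColoring E Q ∧ #Q.parts = n})
    ⟨_, P, hP, rfl⟩

theorem IsDiColoring.exists_inducedRel_sup {P : Finpartition (univ : Finset V)}
    (hP : IsDiColoring E P) {F : Finset (Finset V)} (hF : F ⊆ P.parts) :
    ∃ Q : Finpartition (univ : Finset ↥(F.sup id)),
      IsDiColoring (inducedRel E (F.sup id)) Q ∧ #Q.parts = #F := by
  obtain ⟨Q, hQ⟩ := (P.ofSubset hF rfl).exists_ofUnivSubtype_parts_eq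
  refine ⟨Q, (isDiColoring_inducedRel_iff E Q).2 ?_, ?_⟩
  · rw [hQ]
    exact fun S hS => hP S (hF hS)
  · rw [← Q.card_ofUnivSubtype_parts, hQ]
    rfl

theorem dichi_le_add_of_isCompl {W U : Finset V} (hWU : IsCompl W U)
    {QW : Finpartition (univ : Finset W)} (hQW : IsDiColoring (inducedRel E W) QW)
    {QU : Finpartition (univ : Finset U)} (hQU : IsDiColoring (inducedRel E U) QU) :
    dichi V E ≤ dichi W (inducedRel E W) + dichi U (inducedRel E U) := by
  obtain ⟨QW, hQW, hW⟩ := hQW.exists_card_eq_dichi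
  obtain ⟨QU, hQU, hU⟩ := hQU.exists_card_eq_dichi
  let P : Finpartition (univ : Finset V) :=
    (QW.ofUnivSubtype.union QU.ofUnivSubtype hWU.disjoint).copy (hWU.sup_eq_top.trans top_eq_univ)
  have hP : IsDiColoring E P := by
    intro S hS
    rcases mem_union.1 hS with hS | hS
    · exact (isDiColoring_inducedRel_iff E QW).1 hQW S hS
    · exact (isDiColoring_inducedRel_iff E QU).1 hQU S hS
  calc dichi V E ≤ #P.parts := dichi_le_card E hP
    _ = _ := by
      simp only [P, Finpartition.copy_parts, Finpartition.card_union_parts,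
        Finpartition.card_ofUnivSubtype_parts, hW, hU]

end Dichromatic

theorem stmt8_general {V : Type*} [Fintype V] [DecidableEq V] (E : V → V → Prop)
    (P : Finpartition (Finset.univ : Finset V))
    (hP : Extreme E P) (W U : Finset V)
    (hW : ∀ v : V, v ∈ W ↔ ∃ S ∈ P.parts, v ∈ S ∧ 3 ≤ S.card)
    (hUW : U = Finset.univ \ W) :
    dichi V E = dichi ↥W (inducedRel E W) + dichi ↥U (inducedRel E U) := by
  have hcol : IsDiColoring E P := hP.1
  have hWU : IsCompl W U := by
    rw [hUW, ← compl_eq_univ_sdiff]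
    exact isCompl_compl
  have hWF : W = (P.parts.filter (3 ≤ #·)).sup id := by
    ext v
    simp only [hW, mem_sup, mem_filter, id]
    exact exists_congr fun S => by tauto
  have hUF : U = (P.parts.filter (¬ 3 ≤ #·)).sup id := by
    rw [hUW, hWF, P.sup_filter_not_eq_sdiff]
  subst hWF hUF
  obtain ⟨QW, hQW, hQWcard⟩ := hcol.exists_inducedRel_sup E (filter_subset (3 ≤ #·) _)
  obtain ⟨QU, hQU, hQUcard⟩ := hcol.exists_inducedRel_sup E (filter_subset (¬ 3 ≤ #·) _)
  refine le_antisymm (dichi_le_add_of_isCompl E hWU hQW hQU) ?_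
  calc _ ≤ #(P.parts.filter (3 ≤ #·)) + #(P.parts.filter (¬ 3 ≤ #·)) :=
        add_le_add (hQWcard ▸ dichi_le_card _ hQW) (hQUcard ▸ dichi_le_card _ hQU)
    _ = dichi V E := by rw [card_filter_add_card_filter_not, hP.2.1]

theorem stmt8 {V : Type*} [Fintype V] [DecidableEq V] (E : V → V → Prop)
    (hirr : Irreflexive E) (P : Finpartition (Finset.univ : Finset V))
    (hP : Extreme E P) (W U : Finset V)
    (hW : ∀ v : V, v ∈ W ↔ ∃ S ∈ P.parts, v ∈ S ∧ 3 ≤ S.card)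
    (hUW : U = Finset.univ \ W) :
    dichi V E = dichi ↥W (inducedRel E W) + dichi ↥U (inducedRel E U) :=
  stmt8_general E P hP W U hW hUW
end

section
/- Let H be a finite undirected graph with Gallai–Edmonds decomposition D(H), A(H), C(H), where D(H) is the set of vertices missed by some maximum matching, A(H) the set of vertices outside D(H) with a neighbour in D(H), and C(H) the remaining vertices. Then every maximum matching of H contains a perfect matching of H[C(H)] and a near-perfect matching of each connected component of H[D(H)]. -/
open Finset

/-!
Encode a matching as the involution of `V` that swaps the two ends of each matching edge and
fixes the unmatched vertices; a maximum matching of `H[S]` is one with the fewest fixed points.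
Two maximum matchings `f` and `g` may be swapped on any vertex set closed under both, such as the
component of `f ∆ g` through a vertex missed by `f` but not by `g`: an alternating path ending at
a vertex missed by `g` but not by `f`.

Such exchanges prove the stability lemma: deleting a vertex of `A` leaves `D` unchanged and lowers
the matching number by one. Hence deleting all of `A` keeps `D`, and a maximum matching `M` of `H`
with its edges at `A` removed stays maximum. In `H - A` no edge leaves a component `K` of `H[D]`,
so `M` restricted to `K` is a maximum matching of `H[K]`, and every vertex of `K` is missed by some
maximum matching of `H[K]`. Gallai's lemma (Lovász's proof, by induction along a walk) then says
that exactly one vertex of `K` is not matched within `K`. A vertex `v ∈ C` lies outside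
`D(H - A)`, so the trimmed matching covers it; its partner is neither in `A`, being still matched
after trimming, nor in `D`, since otherwise `v ∈ A`.
-/

section Involution

open Function Set

theorem Int.dvd_or_dvd_sub_half_of_dvd_two_mul {m : ℕ} {k : ℤ}
    (h : (m : ℤ) ∣ 2 * k ∨ (m : ℤ) ∣ 2 * k - 1) :
    (m : ℤ) ∣ k ∨ (m : ℤ) ∣ k - (m + 1) / 2 := by
  obtain ⟨r, rfl | rfl⟩ := Nat.even_or_odd' m <;> push_cast at h ⊢
  · rw [show (2 * (r : ℤ) + 1) / 2 = r by omega]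
    rcases h with ⟨c, hc⟩ | ⟨c, hc⟩
    · obtain ⟨s, rfl | rfl⟩ := Int.even_or_odd' c
      · exact .inl ⟨s, by linarith⟩
      · exact .inr ⟨s, by linarith⟩
    · have : 2 * k - 1 = 2 * (r * c) := by rw [hc]; ring
      omega
  · rw [show (2 * (r : ℤ) + 1 + 1) / 2 = r + 1 by omega]
    rcases h with ⟨c, hc⟩ | ⟨c, hc⟩ <;> obtain ⟨s, rfl | rfl⟩ := Int.even_or_odd' c
    · exact .inl ⟨s, by linarith⟩
    · have : 2 * k = 2 * (2 * r * s + r + s) + 1 := by rw [hc]; ring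
      omega
    · have : 2 * k - 1 = 2 * (2 * r * s + s) := by rw [hc]; ring
      omega
    · exact .inr ⟨s, by linarith⟩

/-- With `ρ = g ∘ f` and `x k = ρ ^ k u`, the involutions act on the `ρ`-orbit of `u` by
`f (x k) = x (-k)` and `g (x k) = x (1 - k)`; so `x k` is fixed by `f` or `g` exactly when the
period `m` of `u` divides `2 k` or `2 k - 1`, that is when `x k` is `u` or `x ((m + 1) / 2)`. -/
theorem Function.Involutive.exists_mapsTo_inter_fixedPoints_subset_pair {α : Type*}
    {f g : α → α} (hf : Involutive f) (hg : Involutive g) {u : α} (hu : f u = u) :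
    ∃ P : Set α, ∃ t, u ∈ P ∧ MapsTo f P P ∧ MapsTo g P P ∧
      (fixedPoints f ∪ fixedPoints g) ∩ P ⊆ {u, t} := by
  set ρ := hg.toPerm * hf.toPerm
  have hρ : ∀ k : ℤ, hf.toPerm * ρ ^ k = ρ ^ (-k) * hf.toPerm := by
    have : SemiconjBy hf.toPerm ρ ρ⁻¹ := by
      ext x
      simp [ρ, Involutive.coe_toPerm]
    intro k
    rw [zpow_neg, ← inv_zpow]
    exact (this.zpow_right k).eq
  let x : ℤ → α := fun k => (ρ ^ k) u
  have hfx : ∀ k, f (x k) = x (-k) := fun k => by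
    simpa [x, hu] using congrArg (· u) (hρ k)
  have hgx : ∀ k, g (x k) = x (1 - k) := fun k => by
    have : g = ρ * hf.toPerm := by ext y; simp [ρ, hf y]
    rw [this, Equiv.Perm.mul_apply, Involutive.coe_toPerm, hfx]
    simp [x, sub_eq_add_neg, zpow_add, Equiv.Perm.mul_apply]
  have hx : ∀ k l, x k = x l ↔ (MulAction.period ρ u : ℤ) ∣ k - l := fun k l => by
    rw [← MulAction.zpow_smul_eq_iff_period_dvd, Equiv.Perm.smul_def, sub_eq_neg_add, zpow_add,
      Equiv.Perm.mul_apply, zpow_neg, Equiv.Perm.inv_eq_iff_eq]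
  refine ⟨range x, x ((MulAction.period ρ u + 1) / 2), ⟨0, rfl⟩, ?_, ?_, ?_⟩
  · rintro _ ⟨k, rfl⟩
    exact ⟨-k, (hfx k).symm⟩
  · rintro _ ⟨k, rfl⟩
    exact ⟨1 - k, (hgx k).symm⟩
  · rintro _ ⟨hk, k, rfl⟩
    simp only [mem_union, mem_fixedPoints, IsFixedPt, hfx, hgx, hx] at hk
    rw [show -k - k = -(2 * k) by ring, show 1 - k - k = -(2 * k - 1) by ring, dvd_neg,
      dvd_neg] at hk
    have := Int.dvd_or_dvd_sub_half_of_dvd_two_mul hk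
    rw [← sub_zero k, ← hx, ← hx, sub_zero] at this
    simpa [x] using this

theorem Function.Involutive.even_ncard_compl_fixedPoints {α : Type*} [Finite α] {f : α → α}
    (hf : Involutive f) : Even (fixedPoints f)ᶜ.ncard := by
  have := Fintype.ofFinite α
  classical
  let σ := hf.toPerm
  have hσ : σ ^ 2 = 1 := by
    ext v
    simp [σ, sq, hf v]
  have : (fixedPoints f)ᶜ = (σ.support : Set α) := by
    ext v
    simp [σ, IsFixedPt]
  rw [this, ncard_coe_finset]
  exact even_iff_two_dvd.2 (Equiv.Perm.two_dvd_card_support hσ)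

theorem Function.Involutive.ncard_fixedPoints_add_two_le_of_lt {α : Type*} [Finite α]
    {f g : α → α} (hf : Involutive f) (hg : Involutive g)
    (h : (fixedPoints f).ncard < (fixedPoints g).ncard) :
    (fixedPoints f).ncard + 2 ≤ (fixedPoints g).ncard := by
  obtain ⟨m, hm⟩ := hf.even_ncard_compl_fixedPoints
  obtain ⟨n, hn⟩ := hg.even_ncard_compl_fixedPoints
  have := ncard_add_ncard_compl (fixedPoints f)
  have := ncard_add_ncard_compl (fixedPoints g)
  omega

end Involution

namespace GallaiEdmonds

open Function Set
open scoped Classical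

variable {V : Type*} {H : SimpleGraph V} {S T P : Set V} {f g : V → V} {a b u v w : V}

/-- `f` swaps the two ends of each edge of a matching of `H[S]` and fixes all other vertices. -/
structure IsMatchingOn (H : SimpleGraph V) (S : Set V) (f : V → V) : Prop where
  involutive : Involutive f
  adj : ∀ ⦃v⦄, f v ≠ v → H.Adj v (f v)
  mem : ∀ ⦃v⦄, f v ≠ v → v ∈ S

lemma isMatchingOn_id : IsMatchingOn H S id :=
  ⟨fun _ => rfl, fun _ h => absurd rfl h, fun _ h => absurd rfl h⟩

namespace IsMatchingOn

lemma mono (hf : IsMatchingOn H S f) (h : S ⊆ T) : IsMatchingOn H T f :=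
  ⟨hf.involutive, hf.adj, fun _ hv => h (hf.mem hv)⟩

lemma apply_mem (hf : IsMatchingOn H S f) (hv : f v ≠ v) : f v ∈ S :=
  hf.mem (by rwa [hf.involutive v, ne_comm])

lemma apply_eq_of_notMem (hf : IsMatchingOn H S f) (hv : v ∉ S) : f v = v :=
  not_not.1 fun h => hv (hf.mem h)

lemma mapsTo (hf : IsMatchingOn H S f) : MapsTo f S S := fun v hv => by
  by_cases h : f v = v
  · rwa [h]
  · exact hf.apply_mem h

lemma mapsTo_of_separated (hf : IsMatchingOn H S f)
    (hsep : ∀ x ∈ T, ∀ y ∈ S \ T, ¬ H.Adj x y) : MapsTo f T T := fun v hv => by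
  by_contra h
  have hfv : f v ≠ v := fun e => h (by rwa [e])
  exact hsep v hv (f v) ⟨hf.apply_mem hfv, h⟩ (hf.adj hfv)

lemma piecewise (hf : IsMatchingOn H S f) (hg : IsMatchingOn H S g) (hPf : MapsTo f P P)
    (hPg : MapsTo g P P) : IsMatchingOn H S (P.piecewise f g) := by
  refine ⟨fun v => ?_, fun v => ?_, fun v => ?_⟩ <;> by_cases hv : v ∈ P
  · rw [Set.piecewise_eq_of_mem _ _ _ hv, Set.piecewise_eq_of_mem _ _ _ (hPf hv), hf.involutive]
  · have : g v ∉ P := fun h => hv (hg.involutive v ▸ hPg h)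
    rw [Set.piecewise_eq_of_notMem _ _ _ hv, Set.piecewise_eq_of_notMem _ _ _ this,
      hg.involutive]
  all_goals first
    | rw [Set.piecewise_eq_of_mem _ _ _ hv] | rw [Set.piecewise_eq_of_notMem _ _ _ hv]
  exacts [@hf.adj v, @hg.adj v, @hf.mem v, @hg.mem v]

end IsMatchingOn

lemma fixedPoints_piecewise :
    fixedPoints (P.piecewise f g) = fixedPoints f ∩ P ∪ fixedPoints g \ P := by
  ext v
  by_cases hv : v ∈ P <;> simp [hv, IsFixedPt]

noncomputable def restrict (f : V → V) (T : Set V) (v : V) : V :=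
  if v ∈ T ∧ f v ∈ T then f v else v

lemma restrict_apply_of_mapsTo (h : MapsTo f T T) (hv : v ∈ T) : restrict f T v = f v :=
  if_pos ⟨hv, h hv⟩

lemma restrict_apply_of_apply_eq (h : f v = v) : restrict f T v = v := by
  simp [restrict, h]

lemma restrict_apply_eq_self_iff (hv : v ∈ T) :
    restrict f T v = v ↔ (f v ∈ T → f v = v) := by
  by_cases hfv : f v ∈ T <;> simp [restrict, hv, hfv]

lemma restrict_apply_ne (h : restrict f T v ≠ v) :
    v ∈ T ∧ f v ∈ T ∧ restrict f T v = f v := by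
  by_cases hv : v ∈ T ∧ f v ∈ T
  · exact ⟨hv.1, hv.2, if_pos hv⟩
  · exact absurd (if_neg hv) h

lemma fixedPoints_restrict_inter (h : MapsTo f T T) :
    fixedPoints (restrict f T) ∩ T = fixedPoints f ∩ T := by
  ext v
  exact and_congr_left fun hv => by
    rw [mem_fixedPoints, IsFixedPt, restrict_apply_of_mapsTo h hv]
    rfl

lemma restrict_restrict {T' : Set V} (h : T' ⊆ T) :
    restrict (restrict f T) T' = restrict f T' := by
  ext v
  by_cases hv : v ∈ T' ∧ f v ∈ T'
  · simp [restrict, hv, h hv.1, h hv.2]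
  · unfold restrict
    split_ifs <;> simp_all

namespace IsMatchingOn

lemma restrict (hf : IsMatchingOn H S f) : IsMatchingOn H T (restrict f T) := by
  refine ⟨fun v => ?_, fun v hv => ?_, fun v hv => (restrict_apply_ne hv).1⟩
  · by_cases h : v ∈ T ∧ f v ∈ T
    · simp only [GallaiEdmonds.restrict, hf.involutive v, h.1, h.2, and_self, if_true]
    · simp only [GallaiEdmonds.restrict, if_neg h]
  · obtain ⟨-, -, h⟩ := restrict_apply_ne hv
    rw [h] at hv ⊢
    exact hf.adj hv

lemma restrict_self (hf : IsMatchingOn H S f) : GallaiEdmonds.restrict f S = f := by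
  ext v
  by_cases hv : v ∈ S
  · exact restrict_apply_of_mapsTo hf.mapsTo hv
  · rw [restrict_apply_of_apply_eq (hf.apply_eq_of_notMem hv), hf.apply_eq_of_notMem hv]

end IsMatchingOn

structure IsMaximumOn (H : SimpleGraph V) (S : Set V) (f : V → V) : Prop where
  isMatchingOn : IsMatchingOn H S f
  ncard_le : ∀ g, IsMatchingOn H S g → (fixedPoints f).ncard ≤ (fixedPoints g).ncard

lemma IsMaximumOn.of_ncard_le (hf : IsMaximumOn H S f) (hg : IsMatchingOn H S g)
    (h : (fixedPoints g).ncard ≤ (fixedPoints f).ncard) : IsMaximumOn H S g :=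
  ⟨hg, fun _ hk => h.trans (hf.ncard_le _ hk)⟩

-- `GEDOn H S` and `GEAOn H S` are the sets `D` and `A` of the induced graph `H[S]`.
def GEDOn (H : SimpleGraph V) (S : Set V) : Set V :=
  {v ∈ S | ∃ f, IsMaximumOn H S f ∧ f v = v}

def GEAOn (H : SimpleGraph V) (S : Set V) : Set V :=
  {v ∈ S \ GEDOn H S | ∃ u ∈ GEDOn H S, H.Adj v u}

lemma IsMaximumOn.apply_ne (hf : IsMaximumOn H S f) (hv : v ∈ S) (hvD : v ∉ GEDOn H S) :
    f v ≠ v :=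
  fun h => hvD ⟨hv, f, hf, h⟩

section Subgraph

variable {M : H.Subgraph}

noncomputable def matchingFun (hM : M.IsMatching) (v : V) : V :=
  if h : v ∈ M.verts then (hM h).choose else v

lemma adj_matchingFun (hM : M.IsMatching) (hv : v ∈ M.verts) : M.Adj v (matchingFun hM v) := by
  rw [matchingFun, dif_pos hv]
  exact (hM hv).choose_spec.1

lemma matchingFun_eq_of_adj (hM : M.IsMatching) (h : M.Adj v w) : matchingFun hM v = w :=
  (hM (M.edge_vert h)).unique (adj_matchingFun hM (M.edge_vert h)) h

lemma matchingFun_of_notMem (hM : M.IsMatching) (hv : v ∉ M.verts) : matchingFun hM v = v :=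
  dif_neg hv

lemma adj_iff_matchingFun (hM : M.IsMatching) : M.Adj v w ↔ matchingFun hM v = w ∧ w ≠ v := by
  refine ⟨fun h => ⟨matchingFun_eq_of_adj hM h, (M.adj_sub h).ne'⟩, fun ⟨h, hwv⟩ => ?_⟩
  have hv : v ∈ M.verts := by_contra fun hv => hwv (h ▸ matchingFun_of_notMem hM hv)
  exact h ▸ adj_matchingFun hM hv

lemma isMatchingOn_matchingFun (hM : M.IsMatching) : IsMatchingOn H univ (matchingFun hM) := by
  refine ⟨fun v => ?_, fun v hv => ?_, fun _ _ => trivial⟩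
  · by_cases hv : v ∈ M.verts
    · exact matchingFun_eq_of_adj hM (adj_matchingFun hM hv).symm
    · rw [matchingFun_of_notMem hM hv, matchingFun_of_notMem hM hv]
  · exact M.adj_sub ((adj_iff_matchingFun hM).2 ⟨rfl, hv⟩)

lemma fixedPoints_matchingFun (hM : M.IsMatching) : fixedPoints (matchingFun hM) = M.vertsᶜ := by
  ext v
  refine ⟨fun hv hvM => ?_, matchingFun_of_notMem hM⟩
  exact (M.adj_sub (adj_matchingFun hM hvM)).ne' hv

def IsMatchingOn.toSubgraph (hf : IsMatchingOn H S f) : H.Subgraph where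
  verts := (fixedPoints f)ᶜ
  Adj v w := f v = w ∧ f v ≠ v
  adj_sub := by
    rintro v _ ⟨rfl, h⟩
    exact hf.adj h
  edge_vert := by
    rintro v _ ⟨rfl, h⟩
    exact h
  symm := ⟨by
    rintro v _ ⟨rfl, h⟩
    exact ⟨hf.involutive v, by rw [hf.involutive]; exact Ne.symm h⟩⟩

lemma IsMatchingOn.isMatching_toSubgraph (hf : IsMatchingOn H S f) : hf.toSubgraph.IsMatching :=
  fun v hv => ⟨f v, ⟨rfl, hv⟩, fun _ hw => hw.1.symm⟩

lemma restrict_matchingFun_eq_self_iff (hM : M.IsMatching) {D : Set V}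
    {K : (H.induce D).ConnectedComponent} {v : D} (hv : v ∈ K.supp) :
    restrict (matchingFun hM) (Subtype.val '' K.supp) v = v ↔
      ¬ ∃ w : D, w ∈ K.supp ∧ M.Adj v w := by
  rw [restrict_apply_eq_self_iff (T := Subtype.val '' K.supp) ⟨v, hv, rfl⟩]
  constructor
  · rintro h ⟨w, hwK, hvw⟩
    obtain ⟨hfv, hwv⟩ := (adj_iff_matchingFun hM).1 hvw
    exact hwv (hfv ▸ h (hfv ▸ ⟨w, hwK, rfl⟩))
  · rintro h ⟨w, hwK, hw⟩
    by_contra hne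
    exact h ⟨w, hwK, (adj_iff_matchingFun hM).2 ⟨hw.symm, hw ▸ hne⟩⟩

end Subgraph

lemma preconnected_induce_image_supp {D : Set V} (K : (H.induce D).ConnectedComponent) :
    (H.induce (Subtype.val '' K.supp)).Preconnected := by
  let φ : K.toSimpleGraph →g H.induce (Subtype.val '' K.supp) :=
    ⟨fun x => ⟨x.1.1, x.1, x.2, rfl⟩, id⟩
  refine K.connected_toSimpleGraph.preconnected.map φ ?_
  rintro ⟨_, x, hx, rfl⟩
  exact ⟨⟨x, hx⟩, rfl⟩

variable [Finite V]

lemma ncard_fixedPoints_piecewise :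
    (fixedPoints (P.piecewise f g)).ncard =
      (fixedPoints f ∩ P).ncard + (fixedPoints g \ P).ncard := by
  rw [fixedPoints_piecewise, ncard_union_eq (disjoint_sdiff_right.mono_left inter_subset_right)]

namespace IsMatchingOn

lemma ncard_fixedPoints_eq (hf : IsMatchingOn H T f) :
    (fixedPoints f).ncard = (fixedPoints f ∩ T).ncard + Tᶜ.ncard := by
  rw [← ncard_inter_add_ncard_sdiff_eq_ncard (fixedPoints f) T]
  congr 2
  ext v
  exact ⟨fun hv => hv.2, fun hv => ⟨hf.apply_eq_of_notMem hv, hv⟩⟩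

lemma exists_add_edge (hf : IsMatchingOn H S f) (hab : H.Adj a b) (ha : a ∈ S) (hb : b ∈ S)
    (hfa : f a = a) (hfb : f b = b) :
    ∃ g, IsMatchingOn H S g ∧ fixedPoints g = fixedPoints f \ {a, b} ∧
      (fixedPoints g).ncard + 2 = (fixedPoints f).ncard := by
  have hswap : IsMatchingOn H S (Equiv.swap a b) := by
    refine ⟨Equiv.swap_apply_self a b, fun v hv => ?_, fun v hv => ?_⟩ <;>
      obtain rfl | rfl : v = a ∨ v = b := by
        by_contra! h
        exact hv (Equiv.swap_apply_of_ne_of_ne h.1 h.2)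
    exacts [by simpa using hab, by simpa using hab.symm, ha, hb]
  have hmaps : MapsTo f {a, b} {a, b} := by rintro _ (rfl | rfl) <;> simp [hfa, hfb]
  have hswap_maps : MapsTo (Equiv.swap a b) {a, b} {a, b} := by rintro _ (rfl | rfl) <;> simp
  refine ⟨_, hswap.piecewise hf hswap_maps hmaps, ?_⟩
  have : fixedPoints (Equiv.swap a b) ∩ {a, b} = ∅ := by
    refine Set.eq_empty_of_forall_notMem ?_
    rintro _ ⟨hv, rfl | rfl⟩ <;> simp [IsFixedPt, hab.ne, hab.ne'] at hv
  rw [fixedPoints_piecewise, this, Set.empty_union]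
  have hsub : ({a, b} : Set V) ⊆ fixedPoints f := by rintro _ (rfl | rfl) <;> assumption
  refine ⟨rfl, ?_⟩
  rw [ncard_sdiff hsub, ncard_pair hab.ne, Nat.sub_add_cancel]
  exact (ncard_pair hab.ne).symm.le.trans (ncard_le_ncard hsub)

end IsMatchingOn

lemma exists_isMaximumOn (H : SimpleGraph V) (S : Set V) : ∃ f, IsMaximumOn H S f := by
  obtain ⟨f, hf, hmin⟩ := Set.exists_min_image {f | IsMatchingOn H S f}
    (fun f => (fixedPoints f).ncard) (Set.toFinite _) ⟨id, isMatchingOn_id⟩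
  exact ⟨f, hf, hmin⟩

namespace IsMaximumOn

lemma ncard_inter_le (hf : IsMaximumOn H S f) (hg : IsMatchingOn H S g) (hPf : MapsTo f P P)
    (hPg : MapsTo g P P) : (fixedPoints f ∩ P).ncard ≤ (fixedPoints g ∩ P).ncard := by
  have := hf.ncard_le _ (hg.piecewise hf.isMatchingOn hPg hPf)
  rw [ncard_fixedPoints_piecewise, ← ncard_inter_add_ncard_sdiff_eq_ncard (fixedPoints f) P]
    at this
  omega

lemma piecewise (hf : IsMaximumOn H S f) (hg : IsMatchingOn H S g) (hPf : MapsTo f P P)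
    (hPg : MapsTo g P P) (h : (fixedPoints g ∩ P).ncard ≤ (fixedPoints f ∩ P).ncard) :
    IsMaximumOn H S (P.piecewise g f) := by
  refine hf.of_ncard_le (hg.piecewise hf.isMatchingOn hPg hPf) ?_
  rw [ncard_fixedPoints_piecewise, ← ncard_inter_add_ncard_sdiff_eq_ncard (fixedPoints f) P]
  omega

/-- `P` is the vertex set of the component of `f ∆ g` through `u`, an alternating path from `u`
to `t`. -/
theorem exists_alternating_path (hf : IsMaximumOn H S f) (hg : IsMaximumOn H S g) (hfu : f u = u)
    (hgu : g u ≠ u) : ∃ P : Set V, ∃ t, MapsTo f P P ∧ MapsTo g P P ∧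
      fixedPoints f ∩ P = {u} ∧ fixedPoints g ∩ P = {t} := by
  obtain ⟨P, t, huP, hPf, hPg, hP⟩ :=
    hf.isMatchingOn.involutive.exists_mapsTo_inter_fixedPoints_subset_pair
      hg.isMatchingOn.involutive hfu
  have hfP : {u} ⊆ fixedPoints f ∩ P := Set.singleton_subset_iff.2 ⟨hfu, huP⟩
  have hgP : fixedPoints g ∩ P ⊆ {t} := fun x hx =>
    (hP ⟨.inr hx.1, hx.2⟩).resolve_left (by rintro rfl; exact hgu hx.1)
  have h₁ := hf.ncard_inter_le hg.isMatchingOn hPf hPg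
  have h₂ := hg.ncard_inter_le hf.isMatchingOn hPg hPf
  have h₃ := ncard_le_ncard hfP
  have h₄ := ncard_le_ncard hgP
  rw [ncard_singleton] at h₃ h₄
  exact ⟨P, t, hPf, hPg, (eq_of_subset_of_ncard_le hfP (by rw [ncard_singleton]; omega)).symm,
    eq_of_subset_of_ncard_le hgP (by rw [ncard_singleton]; omega)⟩

lemma not_adj (hf : IsMaximumOn H S f) (ha : a ∈ S) (hb : b ∈ S) (hfa : f a = a)
    (hfb : f b = b) : ¬ H.Adj a b := fun hab => by
  obtain ⟨g, hg, -, hcard⟩ := hf.isMatchingOn.exists_add_edge hab ha hb hfa hfb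
  have := hf.ncard_le g hg
  omega

end IsMaximumOn

section Separated

lemma IsMaximumOn.restrict_of_separated (hf : IsMaximumOn H S f) (hTS : T ⊆ S)
    (hsep : ∀ x ∈ T, ∀ y ∈ S \ T, ¬ H.Adj x y) : IsMaximumOn H T (restrict f T) := by
  have hT := hf.isMatchingOn.mapsTo_of_separated hsep
  have hr : IsMatchingOn H T (restrict f T) := hf.isMatchingOn.restrict
  refine ⟨hr, fun g hg => ?_⟩
  rw [hr.ncard_fixedPoints_eq, hg.ncard_fixedPoints_eq, fixedPoints_restrict_inter hT]
  have := hf.ncard_inter_le (hg.mono hTS) hT hg.mapsTo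
  omega

lemma GEDOn_of_separated (hTS : T ⊆ S) (hsep : ∀ x ∈ T, ∀ y ∈ S \ T, ¬ H.Adj x y) :
    GEDOn H T = GEDOn H S ∩ T := by
  ext v
  constructor
  · rintro ⟨hvT, g, hg, hgv⟩
    obtain ⟨f, hf⟩ := exists_isMaximumOn H S
    have hT := hf.isMatchingOn.mapsTo_of_separated hsep
    have hr := hf.restrict_of_separated hTS hsep
    have hle := hg.ncard_inter_le hr.isMatchingOn hg.isMatchingOn.mapsTo hr.isMatchingOn.mapsTo
    rw [fixedPoints_restrict_inter hT] at hle
    refine ⟨⟨hTS hvT, _, hf.piecewise (hg.isMatchingOn.mono hTS) hT hg.isMatchingOn.mapsTo hle,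
      ?_⟩, hvT⟩
    rwa [Set.piecewise_eq_of_mem _ _ _ hvT]
  · rintro ⟨⟨-, f, hf, hfv⟩, hvT⟩
    refine ⟨hvT, _, hf.restrict_of_separated hTS hsep, ?_⟩
    rw [restrict_apply_of_mapsTo (hf.isMatchingOn.mapsTo_of_separated hsep) hvT, hfv]

end Separated

section Stability

lemma ncard_fixedPoints_restrict_sdiff_singleton_le (hf : IsMatchingOn H S f) :
    (fixedPoints (restrict f (S \ {a}))).ncard ≤ (fixedPoints f).ncard + 2 := by
  have hsub : fixedPoints (restrict f (S \ {a})) ⊆ fixedPoints f ∪ {a, f a} := by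
    intro v hv
    by_cases hfv : f v = v
    · exact .inl hfv
    by_cases hva : v = a
    · exact .inr (.inl hva)
    have := (restrict_apply_eq_self_iff (T := S \ {a}) ⟨hf.mem hfv, hva⟩).1 hv
    have hfva : f v = a := by_contra fun h => hfv (this ⟨hf.apply_mem hfv, h⟩)
    exact .inr (.inr (show v = f a by rw [← hfva, hf.involutive]))
  calc (fixedPoints (restrict f (S \ {a}))).ncard
      ≤ (fixedPoints f).ncard + ({a, f a} : Set V).ncard :=
        (ncard_le_ncard hsub).trans (ncard_union_le _ _)
    _ ≤ (fixedPoints f).ncard + 2 := by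
        gcongr
        exact (ncard_insert_le _ _).trans (by rw [ncard_singleton])

namespace IsMaximumOn

lemma ncard_fixedPoints_add_two_le (hf : IsMaximumOn H S f) (ha : a ∈ S) (haD : a ∉ GEDOn H S)
    (hg : IsMatchingOn H (S \ {a}) g) : (fixedPoints f).ncard + 2 ≤ (fixedPoints g).ncard := by
  have hgS := hg.mono sdiff_subset
  refine hf.isMatchingOn.involutive.ncard_fixedPoints_add_two_le_of_lt hg.involutive
    (lt_of_le_of_ne (hf.ncard_le g hgS) ?_)
  exact fun h => haD ⟨ha, g, hf.of_ncard_le hgS h.ge, hg.apply_eq_of_notMem fun h => h.2 rfl⟩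

lemma restrict_sdiff_singleton (hf : IsMaximumOn H S f) (ha : a ∈ S) (haD : a ∉ GEDOn H S) :
    IsMaximumOn H (S \ {a}) (restrict f (S \ {a})) :=
  ⟨hf.isMatchingOn.restrict, fun _ hg => (ncard_fixedPoints_restrict_sdiff_singleton_le
    hf.isMatchingOn).trans (hf.ncard_fixedPoints_add_two_le ha haD hg)⟩

end IsMaximumOn

/-- Adding the edge `a y` to `g` gives a maximum matching of `H[S]`. -/
lemma mem_GEDOn_of_isMaximumOn_sdiff_singleton {y : V} (ha : a ∈ S) (haD : a ∉ GEDOn H S)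
    (hg : IsMaximumOn H (S \ {a}) g) (hay : H.Adj a y) (hy : y ∈ S) (hgy : g y = y)
    (hv : v ∈ S) (hgv : g v = v) (hva : v ≠ a) (hvy : v ≠ y) : v ∈ GEDOn H S := by
  obtain ⟨f, hf⟩ := exists_isMaximumOn H S
  obtain ⟨g', hg', hfix, hcard⟩ := (hg.isMatchingOn.mono sdiff_subset).exists_add_edge hay ha hy
    (hg.isMatchingOn.apply_eq_of_notMem fun h => h.2 rfl) hgy
  refine ⟨hv, g', hf.of_ncard_le hg' ?_, ?_⟩
  · have := hg.ncard_le _ (hf.restrict_sdiff_singleton ha haD).isMatchingOn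
    have := ncard_fixedPoints_restrict_sdiff_singleton_le (a := a) hf.isMatchingOn
    omega
  · have : v ∈ fixedPoints g \ {a, y} := ⟨hgv, by simp [hva, hvy]⟩
    rwa [← hfix] at this

/-- Let `g` be a maximum matching of `S \ {a}` missing `v`, and `u ∈ D(S)` a neighbour of `a`.
If `g` misses `u`, add the edge `a u` to it. Otherwise exchange along the alternating path from `u`
between `g` and a maximum matching `N` of `S` missing `u`, trimmed at `a`: either `g` is changed to
miss `u`, or `N` is changed to miss `v` and still misses the former partner of `a`. -/
lemma GEDOn_sdiff_singleton_subset (ha : a ∈ GEAOn H S) : GEDOn H (S \ {a}) ⊆ GEDOn H S := by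
  obtain ⟨⟨haS, haD⟩, u, hu, hau⟩ := ha
  rintro v ⟨⟨hvS, hva⟩, g, hg, hgv⟩
  by_cases hvu : v = u
  · exact hvu ▸ hu
  by_cases hgu : g u = u
  · exact mem_GEDOn_of_isMaximumOn_sdiff_singleton haS haD hg hau hu.1 hgu hvS hgv hva hvu
  obtain ⟨N, hN, hNu⟩ := hu.2
  have hN' := hN.restrict_sdiff_singleton haS haD
  have hNa := hN.apply_ne haS haD
  have hxu : N a ≠ u := fun h => haD (by
    rwa [show a = u by rw [← hN.isMatchingOn.involutive a, h, hNu]])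
  have hN'x : restrict N (S \ {a}) (N a) = N a := by
    rw [restrict_apply_eq_self_iff (T := S \ {a}) ⟨hN.isMatchingOn.apply_mem hNa, hNa⟩,
      hN.isMatchingOn.involutive]
    exact fun h => absurd rfl h.2
  obtain ⟨P, t, hPN, hPg, hNP, hgP⟩ :=
    hN'.exists_alternating_path hg (restrict_apply_of_apply_eq hNu) hgu
  have hcard : (fixedPoints g ∩ P).ncard = (fixedPoints (restrict N (S \ {a})) ∩ P).ncard := by
    rw [hNP, hgP, ncard_singleton, ncard_singleton]
  by_cases hvP : v ∈ P
  · have hxP : N a ∉ P := fun h => hxu (by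
      have : N a ∈ fixedPoints (restrict N (S \ {a})) ∩ P := ⟨hN'x, h⟩
      rwa [hNP] at this)
    refine mem_GEDOn_of_isMaximumOn_sdiff_singleton haS haD
      (hN'.piecewise hg.isMatchingOn hPN hPg hcard.le) (hN.isMatchingOn.adj hNa)
      (hN.isMatchingOn.apply_mem hNa) ?_ hvS ?_ hva fun h => hxP (h ▸ hvP)
    · rwa [Set.piecewise_eq_of_notMem _ _ _ hxP]
    · rwa [Set.piecewise_eq_of_mem _ _ _ hvP]
  · have huP : u ∈ P := (hNP.symm ▸ mem_singleton u : u ∈ fixedPoints _ ∩ P).2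
    refine mem_GEDOn_of_isMaximumOn_sdiff_singleton haS haD
      (hg.piecewise hN'.isMatchingOn hPg hPN hcard.ge) hau hu.1 ?_ hvS ?_ hva hvu
    · rw [Set.piecewise_eq_of_mem _ _ _ huP]
      exact restrict_apply_of_apply_eq hNu
    · rwa [Set.piecewise_eq_of_notMem _ _ _ hvP]

lemma GEDOn_sdiff_singleton (ha : a ∈ GEAOn H S) : GEDOn H (S \ {a}) = GEDOn H S := by
  refine (GEDOn_sdiff_singleton_subset ha).antisymm ?_
  rintro v ⟨hvS, f, hf, hfv⟩
  have hva : v ≠ a := fun h => ha.1.2 (h ▸ ⟨hvS, f, hf, hfv⟩)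
  exact ⟨⟨hvS, hva⟩, _, hf.restrict_sdiff_singleton ha.1.1 ha.1.2,
    restrict_apply_of_apply_eq hfv⟩

lemma GEAOn_sdiff_singleton (ha : a ∈ GEAOn H S) : GEAOn H (S \ {a}) = GEAOn H S \ {a} := by
  ext v
  simp only [GEAOn, GEDOn_sdiff_singleton ha, mem_ofPred_eq, Set.mem_sdiff, mem_singleton_iff]
  tauto

lemma GEDOn_sdiff_of_subset_GEAOn {B : Set V} (hB : B ⊆ GEAOn H S) :
    GEDOn H (S \ B) = GEDOn H S ∧ GEAOn H (S \ B) = GEAOn H S \ B := by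
  refine Set.Finite.induction_on_subset
    (motive := fun B _ => GEDOn H (S \ B) = GEDOn H S ∧ GEAOn H (S \ B) = GEAOn H S \ B)
    B (toFinite B) (by simp) ?_
  intro a t haB _ hat ⟨ihD, ihA⟩
  have ha : a ∈ GEAOn H (S \ t) := ihA ▸ ⟨hB haB, hat⟩
  simp only [Set.insert_eq, Set.union_comm {a} t, ← Set.sdiff_sdiff]
  rw [GEDOn_sdiff_singleton ha, GEAOn_sdiff_singleton ha, ihD, ihA]
  exact ⟨rfl, rfl⟩

lemma IsMaximumOn.restrict_sdiff {B : Set V} (hB : B ⊆ GEAOn H S) (hf : IsMaximumOn H S f) :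
    IsMaximumOn H (S \ B) (restrict f (S \ B)) := by
  refine Set.Finite.induction_on_subset
    (motive := fun B _ => IsMaximumOn H (S \ B) (restrict f (S \ B)))
    B (toFinite B) (by simpa [hf.isMatchingOn.restrict_self]) ?_
  intro a t haB htB hat ih
  have ha : a ∈ GEAOn H (S \ t) :=
    (GEDOn_sdiff_of_subset_GEAOn (htB.trans hB)).2 ▸ ⟨hB haB, hat⟩
  simp only [Set.insert_eq, Set.union_comm {a} t, ← Set.sdiff_sdiff]
  rw [← restrict_restrict (show (S \ t) \ {a} ⊆ S \ t from Set.sdiff_subset)]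
  exact ih.restrict_sdiff_singleton ha.1.1 ha.1.2

end Stability

section Gallai

/-- Lovász's argument, by induction along the walk `u z ⋯ w`. Among the maximum matchings missing
`z` take `g` agreeing with `f` on as many vertices as possible, and let `P` be the alternating path
of `f ∆ g` from `u`. If `P` ends at `z`, swapping `f` to `g` on `P` gives a maximum matching
missing `z` and `w`; otherwise swapping `g` to `f` on `P` contradicts the choice of `g`. -/
theorem IsMaximumOn.eq_of_reachable (hD : S ⊆ GEDOn H S) (hf : IsMaximumOn H S f) {u w : S}
    (huw : (H.induce S).Reachable u w) (hfu : f u = u) (hfw : f w = w) : u = w := by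
  obtain ⟨p⟩ := huw
  induction p generalizing f with
  | nil => rfl
  | @cons u z w huz p ih =>
    by_contra huw
    have hfz : f z ≠ z := fun h => hf.not_adj u.2 z.2 hfu h huz
    obtain ⟨g, ⟨hg, hgz⟩, hgmax⟩ := Set.exists_max_image {g | IsMaximumOn H S g ∧ g z = z}
      (fun g => {x | g x = f x}.ncard) (toFinite _) (hD z.2).2
    have hgu : g u ≠ u := fun h => hg.not_adj u.2 z.2 h hgz huz
    obtain ⟨P, t, hPf, hPg, hfP, hgP⟩ := hf.exists_alternating_path hg hfu hgu
    have hcard : (fixedPoints g ∩ P).ncard = (fixedPoints f ∩ P).ncard := by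
      rw [hfP, hgP, ncard_singleton, ncard_singleton]
    have huP : (u : V) ∈ P :=
      (hfP.symm ▸ mem_singleton (u : V) : (u : V) ∈ fixedPoints f ∩ P).2
    by_cases hzP : (z : V) ∈ P
    · have hwP : (w : V) ∉ P := fun h => huw (Subtype.ext (by
        have : (w : V) ∈ fixedPoints f ∩ P := ⟨hfw, h⟩
        rw [hfP] at this
        exact this.symm))
      have hzw := ih (hf.piecewise hg.isMatchingOn hPf hPg hcard.le)
        (by rwa [Set.piecewise_eq_of_mem _ _ _ hzP]) (by rwa [Set.piecewise_eq_of_notMem _ _ _ hwP])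
      exact hfz (by rw [hzw, hfw])
    · have hlt : {x | g x = f x}.ncard < {x | P.piecewise f g x = f x}.ncard := by
        refine ncard_lt_ncard ⟨fun x hx => ?_, fun h => hgu ?_⟩
        · by_cases hxP : x ∈ P
          · exact Set.piecewise_eq_of_mem _ _ _ hxP
          · exact (Set.piecewise_eq_of_notMem _ _ _ hxP).trans hx
        · rw [h (Set.piecewise_eq_of_mem _ _ _ huP), hfu]
      exact (hgmax _ ⟨hg.piecewise hf.isMatchingOn hPg hPf hcard.ge,
        by rwa [Set.piecewise_eq_of_notMem _ _ _ hzP]⟩).not_gt hlt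

theorem IsMaximumOn.existsUnique_fixed (hD : S ⊆ GEDOn H S) (hS : S.Nonempty)
    (hconn : (H.induce S).Preconnected) (hf : IsMaximumOn H S f) : ∃! z, z ∈ S ∧ f z = z := by
  obtain ⟨z, hzS, hfz⟩ : ∃ z ∈ S, f z = z := by
    by_contra! h
    obtain ⟨v, hv⟩ := hS
    obtain ⟨-, g, hg, hgv⟩ := hD hv
    have hf0 : fixedPoints f ∩ S = ∅ := Set.eq_empty_of_forall_notMem fun x hx => h x hx.2 hx.1
    have hg1 : 0 < (fixedPoints g ∩ S).ncard := (ncard_pos).2 ⟨v, hgv, hv⟩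
    have := hg.ncard_le f hf.isMatchingOn
    rw [hg.isMatchingOn.ncard_fixedPoints_eq, hf.isMatchingOn.ncard_fixedPoints_eq, hf0,
      ncard_empty] at this
    omega
  exact ⟨z, ⟨hzS, hfz⟩, fun y ⟨hyS, hfy⟩ =>
    congrArg Subtype.val (hf.eq_of_reachable hD (hconn ⟨y, hyS⟩ ⟨z, hzS⟩) hfy hfz)⟩

end Gallai

section MaximumMatching

variable {M : H.Subgraph}

lemma _root_.SimpleGraph.Subgraph.IsMatching.ncard_verts (hM : M.IsMatching) :
    M.verts.ncard = 2 * M.edgeSet.ncard := by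
  have := Fintype.ofFinite V
  have hdeg : ∀ v, M.spanningCoe.degree v = if v ∈ M.verts then 1 else 0 := by
    intro v
    rw [SimpleGraph.Subgraph.degree_spanningCoe]
    split_ifs with hv
    · exact (SimpleGraph.Subgraph.isMatching_iff_forall_degree.1 hM) v hv
    · exact SimpleGraph.Subgraph.degree_of_notMem_verts hv
  have h := M.spanningCoe.sum_degrees_eq_twice_card_edges
  simp only [hdeg, Finset.sum_boole, Nat.cast_id] at h
  rw [← SimpleGraph.Subgraph.edgeSet_spanningCoe, ← SimpleGraph.coe_edgeFinset,
    Set.ncard_coe_finset, ← h, ← Set.ncard_coe_finset]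
  simp

lemma ncard_fixedPoints_matchingFun_add (hM : M.IsMatching) :
    (fixedPoints (matchingFun hM)).ncard + 2 * M.edgeSet.ncard = Nat.card V := by
  rw [← hM.ncard_verts, fixedPoints_matchingFun, add_comm, ncard_add_ncard_compl]

lemma isMaximumOn_matchingFun (hM : IsMaxMatching H M) :
    IsMaximumOn H univ (matchingFun hM.1) := by
  refine ⟨isMatchingOn_matchingFun hM.1, fun g hg => ?_⟩
  have h₁ := hM.2 _ hg.isMatching_toSubgraph
  have h₂ := ncard_fixedPoints_matchingFun_add hM.1
  have h₃ : (fixedPoints g)ᶜ.ncard = _ := hg.isMatching_toSubgraph.ncard_verts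
  have h₄ := ncard_add_ncard_compl (fixedPoints g)
  omega

lemma IsMaximumOn.isMaxMatching_toSubgraph (hf : IsMaximumOn H univ f) :
    IsMaxMatching H hf.isMatchingOn.toSubgraph := by
  refine ⟨hf.isMatchingOn.isMatching_toSubgraph, fun M' hM' => ?_⟩
  have h₁ := hf.ncard_le _ (isMatchingOn_matchingFun hM')
  have h₂ := ncard_fixedPoints_matchingFun_add hM'
  have h₃ : (fixedPoints f)ᶜ.ncard = _ := hf.isMatchingOn.isMatching_toSubgraph.ncard_verts
  have h₄ := ncard_add_ncard_compl (fixedPoints f)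
  omega

lemma GEDOn_univ : GEDOn H univ = GED H := by
  ext v
  constructor
  · rintro ⟨-, f, hf, hfv⟩
    exact ⟨_, hf.isMaxMatching_toSubgraph, fun h => h hfv⟩
  · rintro ⟨M, hM, hv⟩
    exact ⟨trivial, _, isMaximumOn_matchingFun hM, matchingFun_of_notMem hM.1 hv⟩

lemma GEAOn_univ : GEAOn H univ = GEA H := by
  ext v
  simp [GEAOn, GEA, GEDOn_univ]

end MaximumMatching

theorem IsMaximumOn.apply_mem_GEC (hf : IsMaximumOn H univ f) (hv : v ∈ GEC H) :
    f v ≠ v ∧ f v ∈ GEC H := by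
  obtain ⟨hvD, hvA⟩ := hv
  rw [← GEDOn_univ] at hvD
  rw [← GEAOn_univ] at hvA
  have hD := (GEDOn_sdiff_of_subset_GEAOn (subset_refl (GEAOn H univ))).1
  have hne := (hf.restrict_sdiff subset_rfl).apply_ne ⟨trivial, hvA⟩ (by rwa [hD])
  obtain ⟨-, hfvW, heq⟩ := restrict_apply_ne hne
  have hfv : f v ≠ v := heq ▸ hne
  refine ⟨hfv, fun hfvD => hvA ⟨⟨trivial, hvD⟩, f v, ?_, hf.isMatchingOn.adj hfv⟩, ?_⟩
  · rwa [GEDOn_univ]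
  · rw [← GEAOn_univ]
    exact hfvW.2

theorem IsMaximumOn.existsUnique_restrict_eq (hf : IsMaximumOn H univ f)
    (K : (H.induce (GED H)).ConnectedComponent) :
    ∃! z, z ∈ Subtype.val '' K.supp ∧ restrict f (Subtype.val '' K.supp) z = z := by
  set A := GEAOn H univ
  set K' := Subtype.val '' K.supp
  have hK'D : K' ⊆ GEDOn H univ := by
    rw [GEDOn_univ]
    exact image_subset_iff.2 fun x _ => x.2
  have hK'W : K' ⊆ univ \ A := fun x hx => ⟨trivial, fun hA => hA.1.2 (hK'D hx)⟩
  have hsep : ∀ x ∈ K', ∀ y ∈ (univ \ A) \ K', ¬ H.Adj x y := by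
    rintro _ ⟨x, hx, rfl⟩ y ⟨hyW, hyK⟩ hxy
    by_cases hyD : y ∈ GED H
    · exact hyK ⟨⟨y, hyD⟩, K.mem_supp_of_adj_mem_supp hx hxy, rfl⟩
    · rw [← GEDOn_univ] at hyD
      exact hyW.2 ⟨⟨trivial, hyD⟩, x, hK'D ⟨x, hx, rfl⟩, hxy.symm⟩
  have hmax := (hf.restrict_sdiff subset_rfl).restrict_of_separated hK'W hsep
  rw [restrict_restrict hK'W] at hmax
  have hDK : K' ⊆ GEDOn H K' := by
    rw [GEDOn_of_separated hK'W hsep, (GEDOn_sdiff_of_subset_GEAOn subset_rfl).1]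
    exact subset_inter hK'D subset_rfl
  exact hmax.existsUnique_fixed hDK (K.nonempty_supp.image _) (preconnected_induce_image_supp K)

end GallaiEdmonds

theorem stmt9 {V : Type*} [Fintype V] (H : SimpleGraph V)
    (M : H.Subgraph) (hM : IsMaxMatching H M) :
    (∀ v ∈ GEC H, ∃ w ∈ GEC H, M.Adj v w) ∧
    (∀ K : (H.induce (GED H)).ConnectedComponent,
      ∃! v : ↥(GED H), v ∈ K.supp ∧
        ¬ ∃ w : ↥(GED H), w ∈ K.supp ∧ M.Adj v.1 w.1) := by
  have hf := GallaiEdmonds.isMaximumOn_matchingFun hM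
  refine ⟨fun v hv => ?_, fun K => ?_⟩
  · obtain ⟨hne, hC⟩ := hf.apply_mem_GEC hv
    exact ⟨_, hC, (GallaiEdmonds.adj_iff_matchingFun hM.1).2 ⟨rfl, hne⟩⟩
  · obtain ⟨_, ⟨⟨z, hzK, rfl⟩, hz⟩, huniq⟩ := hf.existsUnique_restrict_eq K
    have hiff := fun {y} (hy : y ∈ K.supp) =>
      GallaiEdmonds.restrict_matchingFun_eq_self_iff hM.1 hy
    refine ⟨z, ⟨hzK, (hiff hzK).1 hz⟩, fun y ⟨hyK, hy⟩ => ?_⟩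
    exact Subtype.ext (huniq y ⟨⟨y, hyK, rfl⟩, (hiff hyK).2 hy⟩)
end

section
/- Let H be a finite undirected graph in which every maximum matching misses at least two vertices. Then the subgraph induced by D(H), the set of vertices missed by some maximum matching, has at least two connected components. -/
/-! Two distinct vertices `u, v` missed by one maximum matching `M` never lie in a common
component of `H[D(H)]`. Induct on a walk `u ~ w ⋯ v` in `H[D(H)]`: among the maximum matchings
missing `w` pick `N` sharing the most edges with `M`. By induction `N` covers `v`, and it covers
`u` since `uw` would otherwise augment it. As `M` and `N` miss equally many vertices, some
`x ≠ w` is missed by `N` but covered by `M`, say by `xy`; trading the `N`-edge at `y` for `xy`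
yields a maximum matching still missing `w` and sharing more edges with `M`. -/

open Finset

open SimpleGraph

namespace SimpleGraph.Subgraph

variable {V : Type*} {G : SimpleGraph V} {M : G.Subgraph} {x y z : V}

lemma IsMatching.ncard_verts_s11 [Finite V] (hM : M.IsMatching) :
    M.verts.ncard = 2 * M.edgeSet.ncard := by
  have := Fintype.ofFinite M.edgeSet
  have hfiber (e : M.edgeSet) : Nat.card {v // hM.toEdge v = e} = 2 := by
    obtain ⟨⟨a, b⟩, hab⟩ := e
    change Nat.card (hM.toEdge ⁻¹' {_}) = 2
    rw [hM.toEdge_preimage_singleton hab, Nat.card_coe_set_eq, Set.ncard_pair]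
    exact fun h => (M.adj_sub hab).ne (congrArg Subtype.val h)
  rw [← Nat.card_coe_set_eq, ← Nat.card_congr (Equiv.sigmaFiberEquiv hM.toEdge), Nat.card_sigma]
  simp only [hfiber, Finset.sum_const, Finset.card_univ, smul_eq_mul]
  rw [← Nat.card_eq_fintype_card, Nat.card_coe_set_eq, mul_comm]

lemma IsMatching.deleteVerts_pair (hM : M.IsMatching) (hyz : M.Adj y z) :
    (M.deleteVerts {y, z}).IsMatching := by
  rintro v ⟨hv, hvyz⟩
  obtain ⟨w, hvw, hw⟩ := hM hv
  have hwyz : w ∉ ({y, z} : Set V) := by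
    rintro (rfl | rfl)
    · exact hvyz (.inr (hM.eq_of_adj_right hvw hyz.symm))
    · exact hvyz (.inl (hM.eq_of_adj_right hvw hyz))
  exact ⟨w, deleteVerts_adj.mpr ⟨hv, hvyz, M.edge_vert hvw.symm, hwyz, hvw⟩,
    fun c hc => hw c (deleteVerts_adj.mp hc).2.2.2.2⟩

lemma IsMatching.edge_eq_of_mem_pair (hM : M.IsMatching) {a b : V} (hab : M.Adj a b)
    (hyz : M.Adj y z) (ha : a ∈ ({y, z} : Set V)) : s(a, b) = s(y, z) := by
  rcases ha with rfl | rfl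
  · rw [hM.eq_of_adj_left hab hyz]
  · rw [hM.eq_of_adj_left hab hyz.symm, Sym2.eq_swap]

lemma IsMatching.diff_subset_edgeSet_deleteVerts_pair (hM : M.IsMatching) (hyz : M.Adj y z) :
    M.edgeSet \ {s(y, z)} ⊆ (M.deleteVerts {y, z}).edgeSet := by
  rintro ⟨a, b⟩ ⟨hab, hne⟩
  exact deleteVerts_adj.mpr ⟨M.edge_vert hab, fun ha => hne (hM.edge_eq_of_mem_pair hab hyz ha),
    M.edge_vert hab.symm,
    fun hb => hne (Sym2.eq_swap.trans (hM.edge_eq_of_mem_pair hab.symm hyz hb)), hab⟩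

lemma IsMatching.exists_swap (hM : M.IsMatching) (hx : x ∉ M.verts) (hxy : G.Adj x y)
    (hyz : M.Adj y z) :
    ∃ M' : G.Subgraph, M'.IsMatching ∧ M'.verts ⊆ insert x M.verts ∧
      insert s(x, y) (M.edgeSet \ {s(y, z)}) ⊆ M'.edgeSet := by
  have hdisj : Disjoint (M.deleteVerts {y, z}).support (G.subgraphOfAdj hxy).support := by
    rw [support_subgraphOfAdj, Set.disjoint_right]
    rintro a (rfl | rfl) ha
    · exact hx ((M.deleteVerts _).support_subset_verts ha).1
    · exact ((M.deleteVerts _).support_subset_verts ha).2 (.inl rfl)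
  refine ⟨M.deleteVerts {y, z} ⊔ G.subgraphOfAdj hxy,
    (hM.deleteVerts_pair hyz).sup (.subgraphOfAdj hxy) hdisj, ?_, ?_⟩
  · rintro a (⟨ha, -⟩ | rfl | rfl)
    exacts [.inr ha, .inl rfl, .inr (M.edge_vert hyz)]
  · rw [edgeSet_sup, edgeSet_subgraphOfAdj, Set.union_singleton]
    exact Set.insert_subset_insert (hM.diff_subset_edgeSet_deleteVerts_pair hyz)

end SimpleGraph.Subgraph

section MaxMatching

variable {V : Type*} [Finite V] {H : SimpleGraph V} {M N : H.Subgraph} {u v w : V}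

lemma exists_isMaxMatching (H : SimpleGraph V) : ∃ M, IsMaxMatching H M := by
  obtain ⟨M, hM, hmax⟩ := Set.exists_max_image {M : H.Subgraph | M.IsMatching}
    (fun M => M.edgeSet.ncard) (Set.toFinite _) ⟨⊥, fun _ h => h.elim⟩
  exact ⟨M, hM, hmax⟩

lemma IsMaxMatching.not_adj (hM : IsMaxMatching H M) (hu : u ∉ M.verts) (hv : v ∉ M.verts) :
    ¬ H.Adj u v := by
  intro huv
  have hdisj : Disjoint M.support (H.subgraphOfAdj huv).support := by
    rw [support_subgraphOfAdj, Set.disjoint_right]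
    rintro _ (rfl | rfl) ha
    exacts [hu (M.support_subset_verts ha), hv (M.support_subset_verts ha)]
  have hle := hM.2 _ (hM.1.sup (.subgraphOfAdj huv) hdisj)
  have huvM : s(u, v) ∉ M.edgeSet := fun h => hu (M.edge_vert h)
  rw [Subgraph.edgeSet_sup, edgeSet_subgraphOfAdj, Set.union_singleton,
    Set.ncard_insert_of_notMem huvM] at hle
  omega

lemma IsMaxMatching.ncard_verts_eq (hM : IsMaxMatching H M) (hN : IsMaxMatching H N) :
    M.verts.ncard = N.verts.ncard := by
  rw [hM.1.ncard_verts_s11, hN.1.ncard_verts_s11, (hM.2 N hN.1).antisymm (hN.2 M hM.1)]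

lemma IsMaxMatching.exists_mem_diff_ne (hM : IsMaxMatching H M) (hN : IsMaxMatching H N)
    (hu : u ∈ N.verts \ M.verts) (hv : v ∈ N.verts \ M.verts) (huv : u ≠ v) (w : V) :
    ∃ x ∈ M.verts \ N.verts, x ≠ w := by
  refine Set.exists_ne_of_one_lt_ncard ?_ w
  have h2 : 2 ≤ (N.verts \ M.verts).ncard := by
    rw [← Set.ncard_pair huv]
    exact Set.ncard_le_ncard (Set.pair_subset hu hv)
  have hMN := Set.ncard_inter_add_ncard_sdiff_eq_ncard M.verts N.verts
  have hNM := Set.ncard_inter_add_ncard_sdiff_eq_ncard N.verts M.verts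
  rw [Set.inter_comm] at hNM
  have := hM.ncard_verts_eq hN
  omega

lemma IsMaxMatching.exists_ncard_inter_lt (hM : IsMaxMatching H M) (hN : IsMaxMatching H N)
    (hw : w ∉ N.verts) (hu : u ∈ N.verts \ M.verts) (hv : v ∈ N.verts \ M.verts) (huv : u ≠ v) :
    ∃ N', IsMaxMatching H N' ∧ w ∉ N'.verts ∧
      (M.edgeSet ∩ N.edgeSet).ncard < (M.edgeSet ∩ N'.edgeSet).ncard := by
  obtain ⟨x, ⟨hxM, hxN⟩, hxw⟩ := hM.exists_mem_diff_ne hN hu hv huv w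
  obtain ⟨y, hxy, -⟩ := hM.1 hxM
  have hyN : y ∈ N.verts := by
    by_contra hyN
    exact hN.not_adj hxN hyN (M.adj_sub hxy)
  obtain ⟨z, hyz, -⟩ := hN.1 hyN
  obtain ⟨N', hN', hverts, hedges⟩ := hN.1.exists_swap hxN (M.adj_sub hxy) hyz
  have hxyN : s(x, y) ∉ N.edgeSet := fun h => hxN (N.edge_vert h)
  have hyzM : s(y, z) ∉ M.edgeSet := fun h =>
    hxN (hM.1.eq_of_adj_left hxy.symm h ▸ N.edge_vert hyz.symm)
  have hyzN : s(y, z) ∈ N.edgeSet := hyz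
  have hcard : N.edgeSet.ncard ≤ N'.edgeSet.ncard := calc
    N.edgeSet.ncard = (insert s(x, y) (N.edgeSet \ {s(y, z)})).ncard := by
      rw [Set.ncard_insert_of_notMem (fun h => hxyN h.1), Set.ncard_sdiff_singleton_add_one hyzN]
    _ ≤ N'.edgeSet.ncard := Set.ncard_le_ncard hedges
  refine ⟨N', ⟨hN', fun P hP => (hN.2 P hP).trans hcard⟩, fun hwN' => ?_, ?_⟩
  · rcases hverts hwN' with rfl | hwN
    exacts [hxw rfl, hw hwN]
  · calc (M.edgeSet ∩ N.edgeSet).ncard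
        < (insert s(x, y) (M.edgeSet ∩ N.edgeSet)).ncard := by
          rw [Set.ncard_insert_of_notMem (fun h => hxyN h.2)]
          exact Nat.lt_succ_self _
      _ ≤ (M.edgeSet ∩ N'.edgeSet).ncard := by
          refine Set.ncard_le_ncard (Set.insert_subset ⟨hxy, hedges (.inl rfl)⟩ ?_)
          exact fun e he => ⟨he.1, hedges (.inr ⟨he.2, fun h => hyzM (h ▸ he.1)⟩)⟩

theorem IsMaxMatching.eq_of_walk_induce_GED {u v : GED H} (p : (H.induce (GED H)).Walk u v)
    (hM : IsMaxMatching H M) (hu : u.1 ∉ M.verts) (hv : v.1 ∉ M.verts) : u = v := by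
  induction p generalizing M with
  | nil => rfl
  | @cons u w v huw p ih =>
    by_contra huv
    by_cases hwv : w = v
    · subst hwv
      exact hM.not_adj hu hv huw
    obtain ⟨N, ⟨hN, hwN⟩, hmax⟩ := Set.exists_max_image
      {N : H.Subgraph | IsMaxMatching H N ∧ w.1 ∉ N.verts}
      (fun N => (M.edgeSet ∩ N.edgeSet).ncard) (Set.toFinite _) w.2
    have huN : u.1 ∈ N.verts := by
      by_contra huN
      exact hN.not_adj huN hwN huw
    have hvN : v.1 ∈ N.verts := by
      by_contra hvN
      exact hwv (ih hN hwN hvN)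
    obtain ⟨N', hN', hwN', hlt⟩ :=
      hM.exists_ncard_inter_lt hN hwN ⟨huN, hu⟩ ⟨hvN, hv⟩ (Subtype.coe_ne_coe.mpr huv)
    exact (hmax N' ⟨hN', hwN'⟩).not_gt hlt

end MaxMatching

theorem stmt11 {V : Type*} [Fintype V] (H : SimpleGraph V)
    (h : ∀ M : H.Subgraph, IsMaxMatching H M → 2 ≤ (M.vertsᶜ).ncard) :
    2 ≤ Nat.card ((H.induce (GED H)).ConnectedComponent) := by
  obtain ⟨M, hM⟩ := exists_isMaxMatching H
  obtain ⟨u, v, hu, hv, huv⟩ := (Set.one_lt_ncard_iff).mp (h M hM)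
  let u' : GED H := ⟨u, M, hM, hu⟩
  let v' : GED H := ⟨v, M, hM, hv⟩
  have hcomp : (H.induce (GED H)).connectedComponentMk u' ≠
      (H.induce (GED H)).connectedComponentMk v' := fun heq =>
    huv (congrArg Subtype.val ((ConnectedComponent.exact heq).elim
      fun p => hM.eq_of_walk_induce_GED p hu hv))
  have := nontrivial_of_ne _ _ hcomp
  exact Finite.one_lt_card
end

section
/- Let G be a digraph with an extreme colouring P, let U be the union of classes of size 1 or 2 and W = V(G)∖U, and let H be the undirected graph on U with edges uv whenever {u,v} is acyclic in G. Let D ⊆ U be the set of vertices of H missed by some maximum matching of H. Then for every u ∈ D there exists an optimal colouring of G in which {u} is a singleton colour class, obtained as P restricted to W together with the colouring of G[U] corresponding to a maximum matching of H missing u. -/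
open Finset

/-- The auxiliary undirected graph on `U`: `u ~ v` iff `{u,v}` is acyclic in the digraph,
i.e. not both arcs `(u,v)`, `(v,u)` are present. -/
def auxGraph {V : Type*} (E : V → V → Prop) (U : Finset V) : SimpleGraph ↥U where
  Adj a b := a ≠ b ∧ ¬ (E a.1 b.1 ∧ E b.1 a.1)
  symm := ⟨fun a b ⟨h1, h2⟩ => ⟨h1.symm, fun hc => h2 ⟨hc.2, hc.1⟩⟩⟩
  loopless := ⟨fun a ⟨h, _⟩ => h rfl⟩

/-! Keep the parts of `P` of size at least three and recolour the rest, `U`, by a maximum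
matching `M` of `H` missing `u`: matched pairs become classes and unmatched vertices singletons.
The new classes are acyclic because edges of `H` are acyclic pairs and a colouring forbids loops.
The parts of `P` inside `U` also come from a matching of `H`, and a colouring of `U` by a matching
has `|U| - (number of edges)` classes; as `M` is maximum, the recolouring uses at most `χ(G)`
colours. -/

section Digraph

variable {V : Type*} {E : V → V → Prop}

theorem diAcyclic_of_rank {α : Type*} [Preorder α] {S : Finset V} (g : V → α)
    (hg : ∀ x ∈ S, ∀ y ∈ S, E x y → g x < g y) : DiAcyclic E S := by
  intro v _ hcyc
  have hlt := hcyc.lift g fun a b ⟨ha, hb, hab⟩ => hg a ha b hb hab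
  rw [Relation.transGen_eq_self] at hlt
  exact lt_irrefl _ hlt

theorem DiAcyclic.not_rel_and_rel {S : Finset V} (hS : DiAcyclic E S) {a b : V}
    (ha : a ∈ S) (hb : b ∈ S) : ¬(E a b ∧ E b a) := fun ⟨hab, hba⟩ =>
  hS a ha (.head ⟨ha, hb, hab⟩ (.single ⟨hb, ha, hba⟩))

theorem IsDiColoring.irrefl [Fintype V] [DecidableEq V] {P : Finpartition (univ : Finset V)}
    (hP : IsDiColoring E P) (v : V) : ¬E v v := fun h =>
  (hP _ (P.part_mem.2 (mem_univ v))).not_rel_and_rel (P.mem_part (mem_univ v))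
    (P.mem_part (mem_univ v)) ⟨h, h⟩

theorem diAcyclic_pair_s12 [DecidableEq V] {a b : V} (ha : ¬E a a) (hb : ¬E b b)
    (hab : ¬(E a b ∧ E b a)) : DiAcyclic E {a, b} := by
  wlog hba : ¬E b a generalizing a b
  · rw [pair_comm]
    exact this hb ha (fun h => hab ⟨h.2, h.1⟩) fun h => hab ⟨h, not_not.1 hba⟩
  -- Every arc inside `{a, b}` goes from `a` to `b`.
  refine diAcyclic_of_rank (fun x => if x = b then 1 else 0) ?_
  simp only [mem_insert, mem_singleton]
  rintro x (rfl | rfl) y (rfl | rfl) hxy <;> grind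

end Digraph

namespace SimpleGraph.Subgraph

variable {W : Type*} {G : SimpleGraph W} {M : G.Subgraph} {v w a b : W}

open Classical in
noncomputable def mate (M : G.Subgraph) (v : W) : W :=
  if h : ∃ w, M.Adj v w then h.choose else v

theorem mate_eq_self_of_notMem (hv : v ∉ M.verts) : M.mate v = v :=
  dif_neg fun ⟨_, h⟩ => hv (M.edge_vert h)

namespace IsMatching

theorem adj_mate (hM : M.IsMatching) (hv : v ∈ M.verts) : M.Adj v (M.mate v) := by
  have h : ∃ w, M.Adj v w := (hM hv).exists
  rw [mate, dif_pos h]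
  exact h.choose_spec

theorem mate_eq_of_adj (hM : M.IsMatching) (h : M.Adj v w) : M.mate v = w :=
  hM.eq_of_adj_left (hM.adj_mate (M.edge_vert h)) h

theorem mate_mate (hM : M.IsMatching) (v : W) : M.mate (M.mate v) = v := by
  by_cases hv : v ∈ M.verts
  · exact hM.mate_eq_of_adj (hM.adj_mate hv).symm
  · rw [mate_eq_self_of_notMem hv, mate_eq_self_of_notMem hv]

theorem mk_mate_eq_mk_mate_iff (hM : M.IsMatching) :
    s(w, M.mate w) = s(v, M.mate v) ↔ w ∈ s(v, M.mate v) := by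
  refine ⟨fun h => h ▸ Sym2.mem_mk_left _ _, fun h => ?_⟩
  rcases Sym2.mem_iff.1 h with rfl | rfl
  · rfl
  · rw [hM.mate_mate, Sym2.eq_swap]

theorem exists_mk_mate_eq_iff (hM : M.IsMatching) :
    (∃ v, s(v, M.mate v) = s(a, b)) ↔ M.Adj a b ∨ (a = b ∧ a ∉ M.verts) := by
  constructor
  · rintro ⟨v, hv⟩
    by_cases hvM : v ∈ M.verts
    · exact .inl (M.adj_congr_of_sym2 hv |>.1 (hM.adj_mate hvM))
    · rw [mate_eq_self_of_notMem hvM, Sym2.eq_iff] at hv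
      obtain ⟨rfl, rfl⟩ | ⟨rfl, rfl⟩ := hv <;> exact .inr ⟨rfl, hvM⟩
  · rintro (h | ⟨rfl, ha⟩)
    · exact ⟨a, by rw [hM.mate_eq_of_adj h]⟩
    · exact ⟨a, by rw [mate_eq_self_of_notMem ha]⟩

theorem card_image_mk_mate_add_ncard_edgeSet [Fintype W] [DecidableEq W] (hM : M.IsMatching) :
    #(univ.image fun v => s(v, M.mate v)) + M.edgeSet.ncard = Fintype.card W := by
  set C := univ.image fun v => s(v, M.mate v)
  have hedgeSet : M.edgeSet = ↑(C.filter fun z => ¬z.IsDiag) := by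
    ext z
    induction z with
    | _ a b =>
      simp only [coe_filter, Set.mem_ofPred_eq, C, mem_image, mem_univ, true_and,
        hM.exists_mk_mate_eq_iff, Sym2.mk_isDiag_iff]
      exact ⟨fun h => ⟨.inl h, (M.adj_sub h).ne⟩, fun ⟨h, hab⟩ => h.resolve_right (hab ·.1)⟩
  have hfibre : ∀ z ∈ C, #{v | s(v, M.mate v) = z} = #z.toFinset := by
    intro z hz
    obtain ⟨v, -, rfl⟩ := mem_image.1 hz
    congr 1
    ext w
    simp only [mem_filter, mem_univ, true_and, Sym2.mem_toFinset, hM.mk_mate_eq_mk_mate_iff]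
  calc #C + M.edgeSet.ncard = ∑ z ∈ C, #z.toFinset := by
        rw [hedgeSet, Set.ncard_coe_finset, card_filter, card_eq_sum_ones, ← sum_add_distrib]
        refine sum_congr rfl fun z _ => ?_
        rw [Sym2.card_toFinset]
        split_ifs <;> rfl
    _ = ∑ z ∈ C, #{v | s(v, M.mate v) = z} := (sum_congr rfl hfibre).symm
    _ = Fintype.card W := (card_eq_sum_card_image _ _).symm

end IsMatching

end SimpleGraph.Subgraph

theorem Sym2.toFinset_injective {α : Type*} [DecidableEq α] :
    Function.Injective (Sym2.toFinset : Sym2 α → Finset α) :=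
  fun z z' h => SetLike.ext fun x => by rw [← Sym2.mem_toFinset, h, Sym2.mem_toFinset]

theorem Sym2.toFinset_map_injective {α β : Type*} [DecidableEq β] {f : α → β}
    (hf : Function.Injective f) : Function.Injective fun z : Sym2 α => (z.map f).toFinset :=
  Sym2.toFinset_injective.comp (Sym2.map.injective hf)

theorem Sym2.card_toFinset_le_two {α : Type*} [DecidableEq α] (z : Sym2 α) : #z.toFinset ≤ 2 := by
  rw [Sym2.card_toFinset]
  split_ifs <;> omega

theorem Finset.eq_of_mem_of_card_le_two {α : Type*} [DecidableEq α] {S : Finset α} {a b c : α}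
    (hS : #S ≤ 2) (ha : a ∈ S) (hb : b ∈ S) (hc : c ∈ S) (hab : a ≠ b) (hac : a ≠ c) : b = c := by
  by_contra hbc
  have : #{a, b, c} ≤ #S := card_le_card (by simp [insert_subset_iff, ha, hb, hc])
  rw [card_eq_three.2 ⟨a, b, c, hab, hac, hbc, rfl⟩] at this
  omega

namespace Finpartition

variable {α : Type*} [Fintype α] [DecidableEq α]

theorem exists_mem_parts_and_iff (P : Finpartition (univ : Finset α)) (p : Finset α → Prop)
    (a : α) : (∃ S ∈ P.parts, a ∈ S ∧ p S) ↔ p (P.part a) := by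
  refine ⟨fun ⟨S, hS, haS, hpS⟩ => P.part_eq_of_mem hS haS ▸ hpS, fun h => ?_⟩
  exact ⟨P.part a, P.part_mem.2 (mem_univ a), P.mem_part (mem_univ a), h⟩

theorem mem_part_comm (P : Finpartition (univ : Finset α)) {a b : α} :
    a ∈ P.part b ↔ b ∈ P.part a := by
  rw [P.mem_part_iff_part_eq_part (mem_univ a) (mem_univ b),
    P.mem_part_iff_part_eq_part (mem_univ b) (mem_univ a), eq_comm]

def ofClassFun (c : α → Finset α) (hc : ∀ x y, y ∈ c x ↔ c y = c x) :
    Finpartition (univ : Finset α) :=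
  ofExistsUnique (univ.image c) (fun _ _ => subset_univ _)
    (fun a _ => ⟨c a, ⟨mem_image_of_mem c (mem_univ a), (hc a a).2 rfl⟩, fun t ⟨ht, hat⟩ => by
      obtain ⟨x, -, rfl⟩ := mem_image.1 ht
      exact ((hc x a).1 hat).symm⟩)
    (fun h => by
      obtain ⟨x, -, hx⟩ := mem_image.1 h
      exact notMem_empty x (hx ▸ (hc x x).2 rfl))

theorem ofClassFun_parts (c : α → Finset α) (hc : ∀ x y, y ∈ c x ↔ c y = c x) :
    (ofClassFun c hc).parts = univ.image c := rfl

end Finpartition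

section Recolouring

open SimpleGraph

variable {V : Type*} [DecidableEq V] {U : Finset V} {G : SimpleGraph U} {M : G.Subgraph}

theorem toFinset_mk_val_inj {a b c d : U} :
    s(a.1, b.1).toFinset = s(c.1, d.1).toFinset ↔ s(a, b) = s(c, d) :=
  (Sym2.toFinset_map_injective Subtype.val_injective).eq_iff (a := s(a, b)) (b := s(c, d))

theorem val_mem_pair_mate_iff (hM : M.IsMatching) (v w : U) :
    w.1 ∈ s(v.1, (M.mate v).1).toFinset ↔
      s(w.1, (M.mate w).1).toFinset = s(v.1, (M.mate v).1).toFinset := by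
  rw [toFinset_mk_val_inj, hM.mk_mate_eq_mk_mate_iff, Sym2.mem_toFinset, Sym2.mem_iff,
    Sym2.mem_iff, Subtype.ext_iff, Subtype.ext_iff]

theorem card_image_pair_mate_add_ncard_edgeSet (hM : M.IsMatching) :
    #(univ.image fun v : U => s(v.1, (M.mate v).1).toFinset) + M.edgeSet.ncard = #U := by
  rw [← Fintype.card_coe U, ← hM.card_image_mk_mate_add_ncard_edgeSet,
    ← card_image_of_injective _ (Sym2.toFinset_map_injective Subtype.val_injective), image_image]
  rfl

theorem exists_pair_mate_eq_iff (hM : M.IsMatching) {a b : U} :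
    (∃ v : U, s(v.1, (M.mate v).1).toFinset = s(a.1, b.1).toFinset) ↔
      M.Adj a b ∨ (a = b ∧ a ∉ M.verts) := by
  simp only [toFinset_mk_val_inj]
  exact hM.exists_mk_mate_eq_iff

variable [Fintype V] {P : Finpartition (univ : Finset V)}

-- `s(x, x).toFinset = {x}`: unmatched vertices of `U` become singleton classes.
noncomputable def recolourClass (P : Finpartition (univ : Finset V)) (U : Finset V)
    {G : SimpleGraph U} (M : G.Subgraph) (x : V) : Finset V :=
  if hx : x ∈ U then s(x, (M.mate ⟨x, hx⟩).1).toFinset else P.part x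

theorem mem_recolourClass_iff (hU : ∀ v, v ∈ U ↔ #(P.part v) ≤ 2) (hM : M.IsMatching) (x y : V) :
    y ∈ recolourClass P U M x ↔ recolourClass P U M y = recolourClass P U M x := by
  have hsubU : ∀ {x} (hx : x ∈ U) {y}, y ∈ s(x, (M.mate ⟨x, hx⟩).1) → y ∈ U := by
    intro x hx y hy
    rcases Sym2.mem_iff.1 hy with rfl | rfl
    exacts [hx, Subtype.prop _]
  have hpartU : ∀ {x y}, y ∈ P.part x → (y ∈ U ↔ x ∈ U) := fun h => by
    rw [hU, hU, (P.mem_part_iff_part_eq_part (mem_univ _) (mem_univ _)).1 h]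
  unfold recolourClass
  by_cases hx : x ∈ U <;> by_cases hy : y ∈ U <;> simp only [hx, hy, dite_true, dite_false]
  · exact val_mem_pair_mate_iff hM ⟨x, hx⟩ ⟨y, hy⟩
  · refine iff_of_false (fun h => hy (hsubU hx (Sym2.mem_toFinset.1 h))) fun h => hy ?_
    exact hsubU hx (Sym2.mem_toFinset.1 (h ▸ P.mem_part (mem_univ y)))
  · refine iff_of_false (fun h => hx ((hpartU h).1 hy)) fun h => hx ?_
    exact hsubU hy (Sym2.mem_toFinset.1 (h ▸ P.mem_part (mem_univ x)))
  · exact P.mem_part_iff_part_eq_part (mem_univ _) (mem_univ _)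

noncomputable def recolouring (hU : ∀ v, v ∈ U ↔ #(P.part v) ≤ 2) (hM : M.IsMatching) :
    Finpartition (univ : Finset V) :=
  .ofClassFun (recolourClass P U M) (mem_recolourClass_iff hU hM)

theorem mem_recolouring_parts_iff (hU : ∀ v, v ∈ U ↔ #(P.part v) ≤ 2) (hM : M.IsMatching)
    {S : Finset V} : S ∈ (recolouring hU hM).parts ↔
      (S ∈ P.parts ∧ 2 < #S) ∨ ∃ v : U, s(v.1, (M.mate v).1).toFinset = S := by
  simp only [recolouring, Finpartition.ofClassFun_parts, mem_image, mem_univ, true_and]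
  constructor
  · rintro ⟨x, rfl⟩
    by_cases hx : x ∈ U
    · exact .inr ⟨⟨x, hx⟩, by rw [recolourClass, dif_pos hx]⟩
    · rw [recolourClass, dif_neg hx]
      exact .inl ⟨P.part_mem.2 (mem_univ x), not_le.1 ((hU x).not.1 hx)⟩
  · rintro (⟨hS, hS2⟩ | ⟨v, rfl⟩)
    · obtain ⟨x, hxS⟩ := P.nonempty_of_mem_parts hS
      have hpart := P.part_eq_of_mem hS hxS
      have hx : x ∉ U := by rw [hU, hpart]; omega
      exact ⟨x, by rw [recolourClass, dif_neg hx, hpart]⟩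
    · exact ⟨v, dif_pos v.2⟩

theorem mem_recolouring_parts_iff_of_three_le (hU : ∀ v, v ∈ U ↔ #(P.part v) ≤ 2)
    (hM : M.IsMatching) {S : Finset V} (hS : 3 ≤ #S) :
    S ∈ (recolouring hU hM).parts ↔ S ∈ P.parts := by
  rw [mem_recolouring_parts_iff]
  have := fun v : U => Sym2.card_toFinset_le_two s(v.1, (M.mate v).1)
  grind

theorem pair_mem_recolouring_parts_iff (hU : ∀ v, v ∈ U ↔ #(P.part v) ≤ 2) (hM : M.IsMatching)
    {a b : U} (hab : a ≠ b) : {a.1, b.1} ∈ (recolouring hU hM).parts ↔ M.Adj a b := by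
  have hcard : #{a.1, b.1} = 2 := card_pair (Subtype.val_injective.ne hab)
  rw [mem_recolouring_parts_iff, hcard, ← Sym2.toFinset_mk_eq, exists_pair_mate_eq_iff hM]
  simp [hab]

theorem singleton_mem_recolouring_parts_iff (hU : ∀ v, v ∈ U ↔ #(P.part v) ≤ 2)
    (hM : M.IsMatching) (v : U) : {v.1} ∈ (recolouring hU hM).parts ↔ v ∉ M.verts := by
  rw [mem_recolouring_parts_iff, card_singleton, ← pair_eq_singleton v.1, ← Sym2.toFinset_mk_eq,
    exists_pair_mate_eq_iff hM]
  have hloop : ¬M.Adj v v := fun h => (M.adj_sub h).ne rfl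
  simp [hloop]

variable {E : V → V → Prop}

theorem isDiColoring_recolouring (hU : ∀ v, v ∈ U ↔ #(P.part v) ≤ 2) (hP : IsDiColoring E P)
    {M : (auxGraph E U).Subgraph} (hM : M.IsMatching) : IsDiColoring E (recolouring hU hM) := by
  intro S hS
  rcases (mem_recolouring_parts_iff hU hM).1 hS with ⟨hS, -⟩ | ⟨v, rfl⟩
  · exact hP S hS
  · rw [Sym2.toFinset_mk_eq]
    refine diAcyclic_pair_s12 (hP.irrefl _) (hP.irrefl _) ?_
    by_cases hv : v ∈ M.verts
    · exact (M.adj_sub (hM.adj_mate hv)).2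
    · rw [Subgraph.mate_eq_self_of_notMem hv]
      exact fun h => hP.irrefl _ h.1

def partMatching (hP : IsDiColoring E P) (U : Finset V) : (auxGraph E U).Subgraph where
  verts := {v | ∃ w, v ≠ w ∧ w.1 ∈ P.part v.1}
  Adj v w := v ≠ w ∧ w.1 ∈ P.part v.1
  adj_sub := fun ⟨hvw, hw⟩ => ⟨hvw,
    (hP _ (P.part_mem.2 (mem_univ _))).not_rel_and_rel (P.mem_part (mem_univ _)) hw⟩
  edge_vert := fun h => ⟨_, h⟩
  symm := ⟨fun _ _ ⟨hvw, hw⟩ => ⟨hvw.symm, P.mem_part_comm.1 hw⟩⟩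

theorem partMatching_adj (hP : IsDiColoring E P) {v w : U} :
    (partMatching hP U).Adj v w ↔ v ≠ w ∧ w.1 ∈ P.part v.1 := Iff.rfl

theorem mem_partMatching_verts (hP : IsDiColoring E P) {v : U} :
    v ∈ (partMatching hP U).verts ↔ ∃ w, v ≠ w ∧ w.1 ∈ P.part v.1 := Iff.rfl

theorem partMatching_isMatching (hU : ∀ v, v ∈ U ↔ #(P.part v) ≤ 2) (hP : IsDiColoring E P) :
    (partMatching hP U).IsMatching := by
  intro v hv
  obtain ⟨w, hvw, hw⟩ := (mem_partMatching_verts hP).1 hv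
  refine ⟨w, ⟨hvw, hw⟩, fun y hvy => Subtype.ext ?_⟩
  obtain ⟨hvy, hy⟩ := (partMatching_adj hP).1 hvy
  exact eq_of_mem_of_card_le_two ((hU v).1 v.2) (P.mem_part (mem_univ _)) hy hw
    (Subtype.val_injective.ne hvy) (Subtype.val_injective.ne hvw)

theorem part_eq_pair_mate_partMatching (hU : ∀ v, v ∈ U ↔ #(P.part v) ≤ 2)
    (hP : IsDiColoring E P) (v : U) :
    P.part v.1 = s(v.1, ((partMatching hP U).mate v).1).toFinset := by
  rw [Sym2.toFinset_mk_eq]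
  by_cases hv : v ∈ (partMatching hP U).verts
  · obtain ⟨hne, hmem⟩ := (partMatching_adj hP).1 ((partMatching_isMatching hU hP).adj_mate hv)
    refine (eq_of_subset_of_card_le ?_ ?_).symm
    · exact insert_subset (P.mem_part (mem_univ _)) (singleton_subset_iff.2 hmem)
    · rw [card_pair (Subtype.val_injective.ne hne)]
      exact (hU v).1 v.2
  · rw [Subgraph.mate_eq_self_of_notMem hv, pair_eq_singleton, eq_singleton_iff_unique_mem]
    refine ⟨P.mem_part (mem_univ _), fun y hy => by_contra fun hyv => hv ?_⟩
    have hyU : y ∈ U := by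
      rw [hU, (P.mem_part_iff_part_eq_part (mem_univ _) (mem_univ _)).1 hy]
      exact (hU v).1 v.2
    exact (mem_partMatching_verts hP).2 ⟨⟨y, hyU⟩, fun h => hyv (congrArg Subtype.val h).symm, hy⟩

theorem card_filter_card_le_two_add_ncard_edgeSet (hU : ∀ v, v ∈ U ↔ #(P.part v) ≤ 2)
    (hP : IsDiColoring E P) :
    #{S ∈ P.parts | #S ≤ 2} + (partMatching hP U).edgeSet.ncard = #U := by
  have hsmall : {S ∈ P.parts | #S ≤ 2} =
      univ.image fun v : U => s(v.1, ((partMatching hP U).mate v).1).toFinset := by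
    ext S
    simp only [mem_filter, mem_image, mem_univ, true_and, ← part_eq_pair_mate_partMatching hU hP]
    constructor
    · rintro ⟨hS, hS2⟩
      obtain ⟨x, hx⟩ := P.nonempty_of_mem_parts hS
      have hpart := P.part_eq_of_mem hS hx
      exact ⟨⟨x, (hU x).2 (hpart ▸ hS2)⟩, hpart⟩
    · rintro ⟨v, rfl⟩
      exact ⟨P.part_mem.2 (mem_univ _), (hU v).1 v.2⟩
  rw [hsmall, card_image_pair_mate_add_ncard_edgeSet (partMatching_isMatching hU hP)]

theorem card_recolouring_parts_le (hU : ∀ v, v ∈ U ↔ #(P.part v) ≤ 2) (hP : IsDiColoring E P)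
    {M : (auxGraph E U).Subgraph} (hM : IsMaxMatching (auxGraph E U) M) :
    #(recolouring hU hM.1).parts ≤ #P.parts := by
  have hcardQ := card_image_pair_mate_add_ncard_edgeSet hM.1
  set pairs := univ.image fun v : U => s(v.1, (M.mate v).1).toFinset
  have hparts : (recolouring hU hM.1).parts = {S ∈ P.parts | 2 < #S} ∪ pairs := by
    ext S
    simp only [mem_recolouring_parts_iff, mem_union, mem_filter, pairs, mem_image, mem_univ,
      true_and]
  have hdisj : Disjoint {S ∈ P.parts | 2 < #S} pairs := by
    refine disjoint_left.2 fun S hS hS' => ?_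
    obtain ⟨v, -, rfl⟩ := mem_image.1 hS'
    have := Sym2.card_toFinset_le_two s(v.1, (M.mate v).1)
    have := (mem_filter.1 hS).2
    omega
  have hsplit : #{S ∈ P.parts | 2 < #S} + #{S ∈ P.parts | #S ≤ 2} = #P.parts := by
    simpa only [not_lt] using card_filter_add_card_filter_not (s := P.parts) (2 < #·)
  have hcardP := card_filter_card_le_two_add_ncard_edgeSet hU hP
  have hmax := hM.2 _ (partMatching_isMatching hU hP)
  rw [hparts, card_union_of_disjoint hdisj]
  omega

end Recolouring

theorem stmt12_general {V : Type*} [Fintype V] [DecidableEq V] (E : V → V → Prop)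
    (P : Finpartition (Finset.univ : Finset V))
    (hP : Extreme E P) (U : Finset V)
    (hU : ∀ v : V, v ∈ U ↔ ∃ S ∈ P.parts, v ∈ S ∧ S.card ≤ 2)
    (u : ↥U)
    (hu : ∃ M : (auxGraph E U).Subgraph, IsMaxMatching (auxGraph E U) M ∧ u ∉ M.verts) :
    ∃ M : (auxGraph E U).Subgraph, IsMaxMatching (auxGraph E U) M ∧ u ∉ M.verts ∧
      ∃ Q : Finpartition (Finset.univ : Finset V),
        IsDiColoring E Q ∧ Q.parts.card = dichi V E ∧ {u.1} ∈ Q.parts ∧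
        (∀ S : Finset V, 3 ≤ S.card → (S ∈ Q.parts ↔ S ∈ P.parts)) ∧
        (∀ a b : ↥U, a ≠ b → ({a.1, b.1} ∈ Q.parts ↔ M.Adj a b)) ∧
        (∀ v : ↥U, {v.1} ∈ Q.parts ↔ v ∉ M.verts) := by
  obtain ⟨M, hM, huM⟩ := hu
  have hU' : ∀ v, v ∈ U ↔ #(P.part v) ≤ 2 := fun v =>
    (hU v).trans (P.exists_mem_parts_and_iff (#· ≤ 2) v)
  have hQ := isDiColoring_recolouring hU' hP.1 hM.1
  have hQcard : #(recolouring hU' hM.1).parts = dichi V E :=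
    le_antisymm ((card_recolouring_parts_le hU' hP.1 hM).trans_eq hP.2.1) (Nat.sInf_le ⟨_, hQ, rfl⟩)
  exact ⟨M, hM, huM, recolouring hU' hM.1, hQ, hQcard,
    (singleton_mem_recolouring_parts_iff hU' hM.1 u).2 huM,
    fun _ => mem_recolouring_parts_iff_of_three_le hU' hM.1,
    fun _ _ => pair_mem_recolouring_parts_iff hU' hM.1,
    singleton_mem_recolouring_parts_iff hU' hM.1⟩

theorem stmt12 {V : Type*} [Fintype V] [DecidableEq V] (E : V → V → Prop)
    (hirr : Irreflexive E) (P : Finpartition (Finset.univ : Finset V))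
    (hP : Extreme E P) (U : Finset V)
    (hU : ∀ v : V, v ∈ U ↔ ∃ S ∈ P.parts, v ∈ S ∧ S.card ≤ 2)
    (u : ↥U)
    (hu : ∃ M : (auxGraph E U).Subgraph, IsMaxMatching (auxGraph E U) M ∧ u ∉ M.verts) :
    ∃ M : (auxGraph E U).Subgraph, IsMaxMatching (auxGraph E U) M ∧ u ∉ M.verts ∧
      ∃ Q : Finpartition (Finset.univ : Finset V),
        IsDiColoring E Q ∧ Q.parts.card = dichi V E ∧ {u.1} ∈ Q.parts ∧
        (∀ S : Finset V, 3 ≤ S.card → (S ∈ Q.parts ↔ S ∈ P.parts)) ∧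
        (∀ a b : ↥U, a ≠ b → ({a.1, b.1} ∈ Q.parts ↔ M.Adj a b)) ∧
        (∀ v : ↥U, {v.1} ∈ Q.parts ↔ v ∉ M.verts) :=
  stmt12_general E P hP U hU u hu
end

section
/- Let G be a digraph and let Q be an extreme colouring of G (an optimal colouring of G minimizing the number of singleton colour classes among all optimal colourings of G) in which {u} is a singleton colour class. If v lies in a class of Q of size at least 3, then (u,v) ∈ E(G) and (v,u) ∈ E(G). -/
open Finset

private lemma diAcyclic_subset {V : Type*} {E : V → V → Prop} {S T : Finset V}
    (h : DiAcyclic E S) (hsub : T ⊆ S) : DiAcyclic E T := fun v hv hc =>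
  h v (hsub hv) (Relation.TransGen.mono (fun _ _ ⟨ha, hb, he⟩ => ⟨hsub ha, hsub hb, he⟩) _ _ hc)

private lemma diAcyclic_pair' {V : Type*} [DecidableEq V] {E : V → V → Prop}
    (hirr : Irreflexive E) {x y : V} (hxy : x ≠ y) (h : ¬ E x y) :
    DiAcyclic E ({x, y} : Finset V) := by
  intro w hw hc
  have key : ∀ a b : V,
      Relation.TransGen (fun a b => a ∈ ({x, y} : Finset V) ∧ b ∈ ({x, y} : Finset V) ∧ E a b) a b →
      a = y ∧ b = x := by
    intro a b hab
    induction hab with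
    | single hr =>
      obtain ⟨ha, hb, he⟩ := hr
      simp only [Finset.mem_insert, Finset.mem_singleton] at ha hb
      rcases ha with rfl | rfl <;> rcases hb with rfl | rfl
      · exact absurd he (hirr _)
      · exact absurd he h
      · exact ⟨rfl, rfl⟩
      · exact absurd he (hirr _)
    | tail _ hr ih =>
      obtain ⟨ha, hb, he⟩ := hr
      obtain ⟨-, rfl⟩ := ih
      simp only [Finset.mem_insert, Finset.mem_singleton] at hb
      rcases hb with rfl | rfl
      · exact absurd he (hirr _)
      · exact absurd he h
  obtain ⟨h1, h2⟩ := key w w hc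
  exact hxy (h2.symm.trans h1)

theorem stmt13 {V : Type*} [Fintype V] [DecidableEq V] (E : V → V → Prop)
    (hirr : Irreflexive E) (P : Finpartition (Finset.univ : Finset V))
    (hP : Extreme E P) (u v : V) (S : Finset V)
    (hu : {u} ∈ P.parts) (hS : S ∈ P.parts) (hv : v ∈ S) (h3 : 3 ≤ S.card) :
    E u v ∧ E v u := by
  by_contra hcon
  rw [not_and_or] at hcon
  classical
  have huS : ({u} : Finset V) ≠ S := by
    intro h; rw [← h] at h3; simp at h3
  have huns : u ∉ S := fun h =>
    huS (P.eq_of_mem_parts hu hS (Finset.mem_singleton_self u) h)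
  have hvu : v ≠ u := fun h => huns (h ▸ hv)
  have hpd := P.supIndep.pairwiseDisjoint
  set S' := S.erase v with hS'def
  set T : Finset V := {u, v} with hTdef
  set rest := (P.parts.erase {u}).erase S with hrest
  -- facts about rest
  have hrest_sub : ∀ W ∈ rest, W ∈ P.parts := fun W hW =>
    Finset.mem_of_mem_erase (Finset.mem_of_mem_erase hW)
  have hrest_neS : ∀ W ∈ rest, W ≠ S := fun W hW => Finset.ne_of_mem_erase hW
  have hrest_neu : ∀ W ∈ rest, W ≠ {u} := fun W hW =>
    Finset.ne_of_mem_erase (Finset.mem_of_mem_erase hW)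
  have hu_not : ∀ W ∈ rest, u ∉ W := fun W hW h =>
    hrest_neu W hW (P.eq_of_mem_parts (hrest_sub W hW) hu h (Finset.mem_singleton_self u))
  have hv_not : ∀ W ∈ rest, v ∉ W := fun W hW h =>
    hrest_neS W hW (P.eq_of_mem_parts (hrest_sub W hW) hS h hv)
  have hS'card : 2 ≤ S'.card := by
    rw [hS'def, Finset.card_erase_of_mem hv]; omega
  have hS'ne : S'.Nonempty := Finset.card_pos.mp (by omega)
  have hS'subS : S' ⊆ S := Finset.erase_subset v S
  have huS' : u ∉ S' := fun h => huns (hS'subS h)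
  have hvS' : v ∉ S' := Finset.notMem_erase v S
  -- T not in insert S' rest, S' not in rest
  have hT_not : T ∉ insert S' rest := by
    intro h
    rcases Finset.mem_insert.mp h with h | h
    · exact huS' (h ▸ (Finset.mem_insert_self u {v}))
    · exact hu_not T h (Finset.mem_insert_self u {v})
  have hS'_not : S' ∉ rest := by
    intro h
    obtain ⟨w, hw⟩ := hS'ne
    have hd := hpd (hrest_sub S' h) hS (hrest_neS S' h)
    exact (Finset.disjoint_left.mp hd hw) (hS'subS hw)
  -- decomposition of P.parts
  have hSrest : S ∈ P.parts.erase {u} := Finset.mem_erase.mpr ⟨Ne.symm huS, hS⟩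
  have hPdecomp : P.parts = insert {u} (insert S rest) := by
    rw [hrest, Finset.insert_erase hSrest, Finset.insert_erase hu]
  have hS_not_rest : S ∉ rest := Finset.notMem_erase S _
  have hu_not_ins : ({u} : Finset V) ∉ insert S rest := by
    intro h
    rcases Finset.mem_insert.mp h with h | h
    · exact huS h
    · exact hrest_neu {u} h rfl
  -- union identity
  have hTS' : T ∪ S' = {u} ∪ S := by
    ext w
    simp only [hTdef, hS'def, Finset.mem_union, Finset.mem_insert, Finset.mem_singleton,
      Finset.mem_erase]
    constructor
    · rintro ((rfl | rfl) | ⟨-, h⟩)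
      · exact Or.inl rfl
      · exact Or.inr hv
      · exact Or.inr h
    · rintro (rfl | h)
      · exact Or.inl (Or.inl rfl)
      · by_cases hwv : w = v
        · exact Or.inl (Or.inr hwv)
        · exact Or.inr ⟨hwv, h⟩
  -- build the new partition
  have hsup : (insert T (insert S' rest)).sup id = (Finset.univ : Finset V) := by
    rw [Finset.sup_insert, Finset.sup_insert]
    have := P.sup_parts
    rw [hPdecomp, Finset.sup_insert, Finset.sup_insert] at this
    rw [← this]
    simp only [id]
    rw [← sup_assoc, ← sup_assoc]
    show T ∪ S' ∪ rest.sup id = {u} ∪ S ∪ rest.sup id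
    rw [hTS']
  have hdisjTS' : Disjoint T S' := by
    rw [hTdef, Finset.disjoint_insert_left, Finset.disjoint_singleton_left]
    exact ⟨huS', hvS'⟩
  have hdisjTW : ∀ W ∈ rest, Disjoint T W := by
    intro W hW
    rw [hTdef, Finset.disjoint_insert_left, Finset.disjoint_singleton_left]
    exact ⟨hu_not W hW, hv_not W hW⟩
  have hdisjS'W : ∀ W ∈ rest, Disjoint S' W := by
    intro W hW
    exact Finset.disjoint_of_subset_left hS'subS
      (hpd hS (hrest_sub W hW) (Ne.symm (hrest_neS W hW)))
  have hsi : (insert T (insert S' rest)).SupIndep id := by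
    rw [Finset.supIndep_iff_pairwiseDisjoint]
    intro a ha b hb hab
    simp only [Finset.coe_insert, Set.mem_insert_iff, Finset.mem_coe] at ha hb
    have hrestpd : ∀ W ∈ rest, ∀ W' ∈ rest, W ≠ W' → Disjoint W W' := fun W hW W' hW' h =>
      hpd (hrest_sub W hW) (hrest_sub W' hW') h
    rcases ha with rfl | rfl | ha <;> rcases hb with rfl | rfl | hb
    · exact absurd rfl hab
    · exact hdisjTS'
    · exact hdisjTW _ hb
    · exact hdisjTS'.symm
    · exact absurd rfl hab
    · exact hdisjS'W _ hb
    · exact (hdisjTW _ ha).symm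
    · exact (hdisjS'W _ ha).symm
    · exact hrestpd _ ha _ hb hab
  have hnb : ⊥ ∉ insert T (insert S' rest) := by
    intro h
    rcases Finset.mem_insert.mp h with h | h
    · exact Finset.notMem_empty u (h ▸ (Finset.mem_insert_self u {v}) : u ∈ (⊥ : Finset V))
    · rcases Finset.mem_insert.mp h with h | h
      · exact hS'ne.ne_empty h.symm
      · exact P.bot_notMem (hrest_sub _ h)
  let Q : Finpartition (Finset.univ : Finset V) := ⟨insert T (insert S' rest), hsi, hsup, hnb⟩
  -- Q is a coloring
  have hQcol : IsDiColoring E Q := by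
    intro W hW
    rcases Finset.mem_insert.mp hW with rfl | hW
    · rcases hcon with h | h
      · exact diAcyclic_pair' hirr (Ne.symm hvu) h
      · have := diAcyclic_pair' hirr hvu h
        rwa [Finset.pair_comm] at this
    · rcases Finset.mem_insert.mp hW with rfl | hW
      · exact diAcyclic_subset (hP.1 S hS) hS'subS
      · exact hP.1 W (hrest_sub W hW)
  -- cards
  have hcard : Q.parts.card = P.parts.card := by
    show (insert T (insert S' rest)).card = P.parts.card
    rw [Finset.card_insert_of_notMem hT_not, Finset.card_insert_of_notMem hS'_not,
      hPdecomp, Finset.card_insert_of_notMem hu_not_ins,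
      Finset.card_insert_of_notMem hS_not_rest]
  -- numSingle
  have hTcard : T.card = 2 := by
    rw [hTdef, Finset.card_insert_of_notMem (by simpa using Ne.symm hvu), Finset.card_singleton]
  have hnumQ : numSingle Q = (rest.filter fun W => W.card = 1).card := by
    show ((insert T (insert S' rest)).filter fun W => W.card = 1).card = _
    rw [Finset.filter_insert, if_neg (by omega), Finset.filter_insert, if_neg (by omega)]
  have hnumP : numSingle P = (rest.filter fun W => W.card = 1).card + 1 := by
    show (P.parts.filter fun W => W.card = 1).card = _
    rw [hPdecomp, Finset.filter_insert, if_pos (Finset.card_singleton u),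
      Finset.filter_insert, if_neg (by omega),
      Finset.card_insert_of_notMem (fun h => hu_not_ins
        (Finset.mem_insert_of_mem (Finset.mem_of_mem_filter _ h)))]
  have := hP.2.2 Q hQcol (hcard.trans hP.2.1)
  omega
end

section
/- If G is a k-vertex-critical digraph on exactly 2k−2 vertices, then k ≥ 2 and G has at least two vertices u with the property that some optimal colouring of G contains {u} as a singleton colour class. -/
open Finset

/-
An optimal colouring has `k` classes covering `2k - 2` vertices. Every class is nonempty, so
if at most one class were a singleton the classes would cover at least `1 + 2(k - 1)` vertices;
hence every optimal colouring already has two singleton classes. Moreover `k ≥ 2`, since `k ≤ 1`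
forces the vertex set to be empty, and the empty digraph has dichromatic number `0`.
-/

theorem Finpartition.two_mul_card_parts_le {α : Type*} [DecidableEq α] {s : Finset α}
    (P : Finpartition s) : 2 * #P.parts ≤ #s + #{S ∈ P.parts | #S = 1} := by
  rw [← P.sum_card_parts, card_filter, mul_comm, ← smul_eq_mul, ← sum_const, ← sum_add_distrib]
  refine sum_le_sum fun S hS => ?_
  have := (P.nonempty_of_mem_parts hS).card_pos
  split_ifs <;> omega

theorem Finpartition.exists_singletons_mem_parts {α : Type*} [DecidableEq α] {s : Finset α}
    (P : Finpartition s) (h : #s + 2 ≤ 2 * #P.parts) :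
    ∃ u v, u ≠ v ∧ {u} ∈ P.parts ∧ {v} ∈ P.parts := by
  have hsingle : 1 < #{S ∈ P.parts | #S = 1} := by
    have := P.two_mul_card_parts_le
    omega
  obtain ⟨S, hS, T, hT, hST⟩ := one_lt_card.mp hsingle
  rw [mem_filter, card_eq_one] at hS hT
  obtain ⟨hSP, u, rfl⟩ := hS
  obtain ⟨hTP, v, rfl⟩ := hT
  exact ⟨u, v, fun huv => hST (huv ▸ rfl), hSP, hTP⟩

theorem dichi_eq_zero_of_isEmpty {V : Type*} [Fintype V] [DecidableEq V] [IsEmpty V]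
    (E : V → V → Prop) : dichi V E = 0 := by
  have hparts : (⊥ : Finpartition (univ : Finset V)).parts = ∅ := by
    rw [Finpartition.parts_eq_empty_iff, univ_eq_empty, bot_eq_empty]
  refine Nat.sInf_eq_zero.mpr (Or.inl ⟨⊥, ?_, ?_⟩)
  · simp [IsDiColoring, hparts]
  · simp [hparts]

theorem exists_optimal_diColoring {V : Type*} [Fintype V] [DecidableEq V] (E : V → V → Prop)
    (h : dichi V E ≠ 0) :
    ∃ P : Finpartition (univ : Finset V), IsDiColoring E P ∧ #P.parts = dichi V E := by
  have hne : {n | ∃ P : Finpartition (univ : Finset V), IsDiColoring E P ∧ #P.parts = n}.Nonempty :=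
    Set.nonempty_iff_ne_empty.mpr fun hempty => h (Nat.sInf_eq_zero.mpr (Or.inr hempty))
  exact Nat.sInf_mem hne

theorem stmt15_general {V : Type*} [Fintype V] [DecidableEq V] (E : V → V → Prop)
    (k : ℕ) (hcrit : VertexCritical E k)
    (hcard : (Fintype.card V : ℤ) = 2 * (k : ℤ) - 2) :
    2 ≤ k ∧ ∃ u v : V, u ≠ v ∧
      (∃ P : Finpartition (Finset.univ : Finset V),
        IsDiColoring E P ∧ P.parts.card = dichi V E ∧ {u} ∈ P.parts) ∧
      (∃ P : Finpartition (Finset.univ : Finset V),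
        IsDiColoring E P ∧ P.parts.card = dichi V E ∧ {v} ∈ P.parts) := by
  have hk : 2 ≤ k := by
    by_contra! hk
    have hV : Fintype.card V = 0 := by omega
    have : IsEmpty V := Fintype.card_eq_zero_iff.mp hV
    have := hcrit.1.symm.trans (dichi_eq_zero_of_isEmpty E)
    omega
  obtain ⟨P, hP, hPcard⟩ := exists_optimal_diColoring E (by rw [hcrit.1]; omega)
  obtain ⟨u, v, huv, hu, hv⟩ := P.exists_singletons_mem_parts (by
    rw [card_univ, hPcard, hcrit.1]
    omega)
  exact ⟨hk, u, v, huv, ⟨P, hP, hPcard, hu⟩, ⟨P, hP, hPcard, hv⟩⟩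

theorem stmt15 {V : Type*} [Fintype V] [DecidableEq V] (E : V → V → Prop)
    (hirr : Irreflexive E) (k : ℕ) (hcrit : VertexCritical E k)
    (hcard : (Fintype.card V : ℤ) = 2 * (k : ℤ) - 2) :
    2 ≤ k ∧ ∃ u v : V, u ≠ v ∧
      (∃ P : Finpartition (Finset.univ : Finset V),
        IsDiColoring E P ∧ P.parts.card = dichi V E ∧ {u} ∈ P.parts) ∧
      (∃ P : Finpartition (Finset.univ : Finset V),
        IsDiColoring E P ∧ P.parts.card = dichi V E ∧ {v} ∈ P.parts) :=
  stmt15_general E k hcrit hcard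
end
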